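/- arXiv:2408.12231 — 11 statements merged into one kernel-verified Lean document; each statement's English description precedes it below -/
import Mathlib

section
/- Let L be a Lindbladian with dual L†(X) = i[H,X] − ½{Φ(𝟙), X} + Φ(X) on a finite-dimensional Hilbert space, and let ρ > 0 be a density matrix with L(ρ) = 0. If Φ is ρ-self-adjoint (i.e., Φ†(Aρ)ρ⁻¹ = Φ(A) for all A) and [Φ, Δ_ρ] = 0 with Δ_ρ(X) = ρXρ⁻¹, then [H, ρ] = 0. -/
open Matrix
open scoped ComplexOrder

/-! Taking `A = 1` in the two symmetry hypotheses gives `Φ(1) ρ = ρ Φ(1)` and `Φ†(ρ) = Φ(1) ρ`.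
Hence the dissipative part of `L(ρ)`, namely `Φ†(ρ) - ½{Φ(1), ρ}`, vanishes, and the steady-state
equation reduces to `-i[H, ρ] = 0`. -/

section Lindblad

variable {A : Type*} [Ring A] [Module ℂ A]

theorem dissipator_eq_zero_of_commute {K ρ : A} (hK : Commute K ρ) :
    K * ρ - (1 / 2 : ℂ) • (K * ρ + ρ * K) = 0 := by
  rw [← hK.eq, ← two_smul ℂ, smul_smul]
  norm_num

theorem commute_of_lindblad_eq_zero {H K ρ : A} (hK : Commute K ρ)
    (h : -(Complex.I • (H * ρ - ρ * H)) + K * ρ - (1 / 2 : ℂ) • (K * ρ + ρ * K) = 0) :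
    H * ρ = ρ * H := by
  rw [add_sub_assoc, dissipator_eq_zero_of_commute hK, add_zero, neg_eq_zero,
    smul_eq_zero] at h
  exact sub_eq_zero.mp (h.resolve_left Complex.I_ne_zero)

end Lindblad

section Conjugation

variable {m R : Type*} [Fintype m] [DecidableEq m] [CommRing R] {ρ : Matrix m m R}

theorem Matrix.commute_of_conj_eq (hρ : IsUnit ρ.det) {K : Matrix m m R}
    (h : ρ * K * ρ⁻¹ = K) : Commute K ρ := by
  rw [Commute, SemiconjBy]
  nth_rw 1 [← h]
  rw [nonsing_inv_mul_cancel_right ρ _ hρ]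

theorem Matrix.eq_mul_of_mul_nonsing_inv_eq (hρ : IsUnit ρ.det) {X Y : Matrix m m R}
    (h : X * ρ⁻¹ = Y) : X = Y * ρ := by
  rw [← h, nonsing_inv_mul_cancel_right ρ _ hρ]

end Conjugation

theorem stmt5_general {n : ℕ}
    (H : Matrix (Fin n) (Fin n) ℂ)
    (Φ Φd L : Matrix (Fin n) (Fin n) ℂ → Matrix (Fin n) (Fin n) ℂ)
    (hL : ∀ σ, L σ = -(Complex.I • (H * σ - σ * H)) + Φd σ
        - (1/2 : ℂ) • (Φ 1 * σ + σ * Φ 1))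
    (ρ : Matrix (Fin n) (Fin n) ℂ) (hρ : ρ.PosDef)
    (hsteady : L ρ = 0)
    (hsa : ∀ A, Φd (A * ρ) * ρ⁻¹ = Φ A)
    (hcomm : ∀ X, Φ (ρ * X * ρ⁻¹) = ρ * Φ X * ρ⁻¹) :
    H * ρ = ρ * H := by
  have hdet : IsUnit ρ.det := (isUnit_iff_isUnit_det ρ).mp hρ.isUnit
  have hK : Commute (Φ 1) ρ := by
    refine commute_of_conj_eq hdet ?_
    rw [← hcomm, mul_one, mul_nonsing_inv ρ hdet]
  have hD : Φd ρ = Φ 1 * ρ := by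
    refine eq_mul_of_mul_nonsing_inv_eq hdet ?_
    simpa only [one_mul] using hsa 1
  rw [hL, hD] at hsteady
  exact commute_of_lindblad_eq_zero hK hsteady

/-- if `ρ > 0` is a steady state of the Lindbladian
`L(σ) = −i[H,σ] + Σ_l (Γ_l σ Γ_l* − ½{Γ_l*Γ_l, σ})`, the associated CP map
`Φ(X) = Σ_l Γ_l* X Γ_l` is `ρ`-self-adjoint (`Φ†(Aρ)ρ⁻¹ = Φ(A)` where
`Φ†(σ) = Σ_l Γ_l σ Γ_l*` is its trace dual), and `[Φ, Δ_ρ] = 0`, then `[H, ρ] = 0`. -/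
theorem stmt5 {n : ℕ} {ι : Type*} [Fintype ι]
    (H : Matrix (Fin n) (Fin n) ℂ) (hH : Hᴴ = H)
    (Γ : ι → Matrix (Fin n) (Fin n) ℂ)
    (Φ Φd L : Matrix (Fin n) (Fin n) ℂ → Matrix (Fin n) (Fin n) ℂ)
    (hΦ : ∀ X, Φ X = ∑ l, (Γ l)ᴴ * X * Γ l)
    (hΦd : ∀ X, Φd X = ∑ l, Γ l * X * (Γ l)ᴴ)
    (hL : ∀ σ, L σ = -(Complex.I • (H * σ - σ * H)) + Φd σ
        - (1/2 : ℂ) • (Φ 1 * σ + σ * Φ 1))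
    (ρ : Matrix (Fin n) (Fin n) ℂ) (hρ : ρ.PosDef) (hρtr : ρ.trace = 1)
    (hsteady : L ρ = 0)
    (hsa : ∀ A, Φd (A * ρ) * ρ⁻¹ = Φ A)
    (hcomm : ∀ X, Φ (ρ * X * ρ⁻¹) = ρ * Φ X * ρ⁻¹) :
    H * ρ = ρ * H :=
  stmt5_general H Φ Φd L hL ρ hρ hsteady hsa hcomm
end

section
/- Detailed balance commutation lemma: Let L be a Lindbladian on a finite-dimensional Hilbert space with faithful steady state ρ satisfying the detailed balance condition (the associated completely positive map Φ is self-adjoint with respect to ⟨A,B⟩_ρ = tr(ρA*B)). Then Diag_ρ ∘ L = L ∘ Diag_ρ, where Diag_ρ is the projection onto the commutant of ρ given by Diag_ρ(T) = Σ_p P_p T P_p with P_p the spectral projections of ρ. -/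
open Matrix
open scoped ComplexOrder

lemma trace_ext' {n : ℕ} (X Y : Matrix (Fin n) (Fin n) ℂ)
    (h : ∀ A : Matrix (Fin n) (Fin n) ℂ, (Aᴴ * X).trace = (Aᴴ * Y).trace) : X = Y := by
  have key : ∀ (Z : Matrix (Fin n) (Fin n) ℂ) (i j : Fin n),
      ((single i j (1:ℂ))ᴴ * Z).trace = Z i j := by
    intro Z i j
    have hct : (single i j (1:ℂ))ᴴ = single j i 1 := by
      ext a b
      simp [single, conjTranspose_apply, and_comm, apply_ite (starRingEnd ℂ)]
    rw [hct, Matrix.trace]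
    simp only [Matrix.diag_apply]
    rw [Finset.sum_eq_single j (fun k _ hk =>
      single_mul_apply_of_ne (1:ℂ) j i k k hk Z)
      (fun hj => absurd (Finset.mem_univ j) hj)]
    simp
  ext i j
  have := h (single i j 1)
  rwa [key, key] at this

lemma trace4' {n : ℕ} (A B C D : Matrix (Fin n) (Fin n) ℂ) :
    (A * B * C * D).trace = (D * A * B * C).trace := by
  rw [trace_mul_cycle (A * B) C D]
  congr 1
  noncomm_ring

/-- detailed balance commutation lemma: if the faithful steady state `ρ`
of the Lindbladian `L(σ) = −i[H,σ] + Σ_l (Γ_l σ Γ_l* − ½{Γ_l*Γ_l, σ})` satisfies the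
detailed balance condition (the CP map `Φ(X) = Σ_l Γ_l* X Γ_l` is self-adjoint for
`⟨A,B⟩_ρ = tr(ρA*B)`), then `Diag_ρ ∘ L = L ∘ Diag_ρ`, where `Diag_ρ(T) = Σ_p P_p T P_p`
with `P_p` the spectral projections of `ρ`. (The known consequence `[Φ, Δ_ρ] = 0` of
detailed balance is also assumed.) -/
theorem stmt6 {n : ℕ} {ι : Type*} [Fintype ι]
    (H : Matrix (Fin n) (Fin n) ℂ) (hH : Hᴴ = H)
    (Γ : ι → Matrix (Fin n) (Fin n) ℂ)
    (Φ Φd L : Matrix (Fin n) (Fin n) ℂ → Matrix (Fin n) (Fin n) ℂ)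
    (hΦ : ∀ X, Φ X = ∑ l, (Γ l)ᴴ * X * Γ l)
    (hΦd : ∀ X, Φd X = ∑ l, Γ l * X * (Γ l)ᴴ)
    (hL : ∀ σ, L σ = -(Complex.I • (H * σ - σ * H)) + Φd σ
        - (1/2 : ℂ) • (Φ 1 * σ + σ * Φ 1))
    (ρ : Matrix (Fin n) (Fin n) ℂ) (hρ : ρ.PosDef) (hρtr : ρ.trace = 1)
    (hsteady : L ρ = 0)
    (hDB : ∀ A B, (ρ * Aᴴ * Φ B).trace = (ρ * (Φ A)ᴴ * B).trace)
    (hmod : ∀ X, Φ (ρ * X * ρ⁻¹) = ρ * Φ X * ρ⁻¹)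
    (σρ : Finset ℝ) (P : ℝ → Matrix (Fin n) (Fin n) ℂ)
    (hpos : ∀ p ∈ σρ, 0 < p)
    (hPh : ∀ p ∈ σρ, (P p)ᴴ = P p)
    (hPo : ∀ p ∈ σρ, ∀ p' ∈ σρ, P p * P p' = if p = p' then P p else 0)
    (hPsum : ∑ p ∈ σρ, P p = 1)
    (hρspec : ρ = ∑ p ∈ σρ, (p : ℂ) • P p)
    (Diagρ : Matrix (Fin n) (Fin n) ℂ → Matrix (Fin n) (Fin n) ℂ)
    (hDiag : ∀ T, Diagρ T = ∑ p ∈ σρ, P p * T * P p) :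
    ∀ T, Diagρ (L T) = L (Diagρ T) := by
  classical
  have hq0 : ∀ q ∈ σρ, ((q : ℝ) : ℂ) ≠ 0 := fun q hq =>
    Complex.ofReal_ne_zero.mpr (ne_of_gt (hpos q hq))
  -- ρ acts as scalar on each P q
  have hρP : ∀ q ∈ σρ, ρ * P q = ((q : ℝ) : ℂ) • P q := by
    intro q hq
    rw [hρspec, Finset.sum_mul]
    rw [Finset.sum_eq_single q (fun p hp hpq => by
        rw [smul_mul_assoc, hPo p hp q hq, if_neg hpq, smul_zero])
      (fun h => absurd hq h)]
    rw [smul_mul_assoc, hPo q hq q hq, if_pos rfl]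
  have hPρ : ∀ q ∈ σρ, P q * ρ = ((q : ℝ) : ℂ) • P q := by
    intro q hq
    rw [hρspec, Finset.mul_sum]
    rw [Finset.sum_eq_single q (fun p hp hpq => by
        rw [mul_smul_comm, hPo q hq p hp, if_neg (Ne.symm hpq), smul_zero])
      (fun h => absurd hq h)]
    rw [mul_smul_comm, hPo q hq q hq, if_pos rfl]
  -- inverse of ρ
  have hρrinv : ρ * (∑ q ∈ σρ, ((q : ℝ) : ℂ)⁻¹ • P q) = 1 := by
    rw [Finset.mul_sum]
    have : ∀ q ∈ σρ, ρ * (((q : ℝ) : ℂ)⁻¹ • P q) = P q := by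
      intro q hq
      rw [mul_smul_comm, hρP q hq, smul_smul, inv_mul_cancel₀ (hq0 q hq), one_smul]
    rw [Finset.sum_congr rfl this, hPsum]
  have hinv : ρ⁻¹ = ∑ q ∈ σρ, ((q : ℝ) : ℂ)⁻¹ • P q := inv_eq_right_inv hρrinv
  have hρρi : ρ * ρ⁻¹ = 1 := by rw [hinv]; exact hρrinv
  have hρiρ : ρ⁻¹ * ρ = 1 := by rw [hinv]; exact mul_eq_one_comm.mp hρrinv
  have hPρi : ∀ q ∈ σρ, P q * ρ⁻¹ = ((q : ℝ) : ℂ)⁻¹ • P q := by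
    intro q hq
    rw [hinv, Finset.mul_sum]
    rw [Finset.sum_eq_single q (fun p hp hpq => by
        rw [mul_smul_comm, hPo q hq p hp, if_neg (Ne.symm hpq), smul_zero])
      (fun h => absurd hq h)]
    rw [mul_smul_comm, hPo q hq q hq, if_pos rfl]
  have hρHerm : ρᴴ = ρ := hρ.1
  have hρiHerm : (ρ⁻¹)ᴴ = ρ⁻¹ := by rw [Matrix.conjTranspose_nonsing_inv, hρHerm]
  -- adjoint relations
  have adj1 : ∀ A B, ((Φ A)ᴴ * B).trace = (Aᴴ * Φd B).trace := by
    intro A B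
    rw [hΦ, hΦd]
    simp only [conjTranspose_sum, conjTranspose_mul, conjTranspose_conjTranspose]
    rw [Finset.sum_mul, Finset.mul_sum, trace_sum, trace_sum]
    refine Finset.sum_congr rfl fun l _ => ?_
    rw [show (Γ l)ᴴ * (Aᴴ * Γ l) * B = (Γ l)ᴴ * Aᴴ * Γ l * B by noncomm_ring,
      show Aᴴ * (Γ l * B * (Γ l)ᴴ) = Aᴴ * Γ l * B * (Γ l)ᴴ by noncomm_ring]
    exact (trace4' Aᴴ (Γ l) B (Γ l)ᴴ).symm
  have adj2 : ∀ A B, ((ρ * A * ρ⁻¹)ᴴ * B).trace = (Aᴴ * (ρ * B * ρ⁻¹)).trace := by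
    intro A B
    simp only [conjTranspose_mul, hρHerm, hρiHerm]
    rw [show ρ⁻¹ * (Aᴴ * ρ) * B = ρ⁻¹ * Aᴴ * ρ * B by noncomm_ring,
      show Aᴴ * (ρ * B * ρ⁻¹) = Aᴴ * ρ * B * ρ⁻¹ by noncomm_ring]
    exact (trace4' Aᴴ ρ B ρ⁻¹).symm
  -- Φd commutes with the modular operator
  have hmodd : ∀ X, Φd (ρ * X * ρ⁻¹) = ρ * Φd X * ρ⁻¹ := by
    intro B
    apply trace_ext'
    intro A
    calc (Aᴴ * Φd (ρ * B * ρ⁻¹)).trace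
        = ((Φ A)ᴴ * (ρ * B * ρ⁻¹)).trace := (adj1 A _).symm
      _ = ((ρ * Φ A * ρ⁻¹)ᴴ * B).trace := (adj2 (Φ A) B).symm
      _ = ((Φ (ρ * A * ρ⁻¹))ᴴ * B).trace := by rw [hmod]
      _ = ((ρ * A * ρ⁻¹)ᴴ * Φd B).trace := adj1 _ _
      _ = (Aᴴ * (ρ * Φd B * ρ⁻¹)).trace := adj2 _ _
  -- Φ 1 commutes with ρ
  have hΦ1ρ : Φ 1 * ρ = ρ * Φ 1 := by
    have h1 := hmod 1
    rw [mul_one, hρρi] at h1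
    calc Φ 1 * ρ = ρ * Φ 1 * ρ⁻¹ * ρ := by rw [← h1]
      _ = ρ * Φ 1 := by rw [mul_assoc, hρiρ, mul_one]
  -- Φd ρ = Φ1 ρ
  have hΦdρ : Φd ρ = Φ 1 * ρ := by
    apply trace_ext'
    intro A
    calc (Aᴴ * Φd ρ).trace = ((Φ A)ᴴ * ρ).trace := (adj1 A ρ).symm
      _ = (ρ * (Φ A)ᴴ * 1).trace := by rw [mul_one, trace_mul_comm]
      _ = (ρ * Aᴴ * Φ 1).trace := (hDB A 1).symm
      _ = (Aᴴ * (Φ 1 * ρ)).trace := by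
          rw [trace_mul_cycle ρ Aᴴ (Φ 1)]
          exact trace_mul_comm (Φ 1 * ρ) Aᴴ
  -- H commutes with ρ
  have hHρ : H * ρ = ρ * H := by
    have h0 := hsteady
    rw [hL ρ, hΦdρ, ← hΦ1ρ] at h0
    have hhalf : (1/2 : ℂ) • (Φ 1 * ρ + Φ 1 * ρ) = Φ 1 * ρ := by
      rw [← two_smul ℂ, smul_smul]; norm_num
    rw [hhalf, add_sub_cancel_right] at h0
    have h1 : Complex.I • (H * ρ - ρ * H) = 0 := neg_eq_zero.mp h0
    rcases smul_eq_zero.mp h1 with h | h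
    · exact absurd h Complex.I_ne_zero
    · exact sub_eq_zero.mp h
  -- general commutation with spectral projections
  have commP : ∀ X : Matrix (Fin n) (Fin n) ℂ, X * ρ = ρ * X →
      ∀ q ∈ σρ, X * P q = P q * X := by
    intro X hX q hq
    have hoff : ∀ s ∈ σρ, ∀ t ∈ σρ, s ≠ t → P s * X * P t = 0 := by
      intro s hs t ht hst
      have a1 : P s * ρ * X * P t = ((s : ℝ) : ℂ) • (P s * X * P t) := by
        rw [hPρ s hs, smul_mul_assoc, smul_mul_assoc]
      have a2 : P s * ρ * X * P t = P s * X * ρ * P t := by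
        rw [mul_assoc (P s) ρ X, ← hX, ← mul_assoc]
      have a3 : P s * X * ρ * P t = ((t : ℝ) : ℂ) • (P s * X * P t) := by
        rw [mul_assoc, hρP t ht, mul_smul_comm]
      have e2 : (((s : ℝ) : ℂ) - ((t : ℝ) : ℂ)) • (P s * X * P t) = 0 := by
        rw [sub_smul, ← a1, a2, a3, sub_self]
      rcases smul_eq_zero.mp e2 with h | h
      · exact absurd (by exact_mod_cast sub_eq_zero.mp h) hst
      · exact h
    have l1 : X * P q = P q * X * P q := by
      calc X * P q = 1 * X * P q := by rw [one_mul]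
        _ = (∑ s ∈ σρ, P s) * X * P q := by rw [hPsum]
        _ = ∑ s ∈ σρ, P s * X * P q := by rw [Finset.sum_mul, Finset.sum_mul]
        _ = P q * X * P q := Finset.sum_eq_single q
            (fun s hs hsq => hoff s hs q hq hsq) (fun h => absurd hq h)
    have l2 : P q * X = P q * X * P q := by
      calc P q * X = P q * X * 1 := by rw [mul_one]
        _ = P q * X * (∑ t ∈ σρ, P t) := by rw [hPsum]
        _ = ∑ t ∈ σρ, P q * X * P t := by rw [Finset.mul_sum]
        _ = P q * X * P q := Finset.sum_eq_single q
            (fun t ht htq => hoff q hq t ht (Ne.symm htq)) (fun h => absurd hq h)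
    rw [l1, ← l2]
  have hHP : ∀ q ∈ σρ, H * P q = P q * H := commP H hHρ
  have hΦ1P : ∀ q ∈ σρ, Φ 1 * P q = P q * Φ 1 := commP (Φ 1) hΦ1ρ
  -- linearity of Φd
  have hΦd_smul : ∀ (c : ℂ) X, Φd (c • X) = c • Φd X := by
    intro c X
    rw [hΦd, hΦd, Finset.smul_sum]
    exact Finset.sum_congr rfl fun l _ => by rw [mul_smul_comm, smul_mul_assoc]
  have hΦd_sum : ∀ (s : Finset ℝ) (f : ℝ → Matrix (Fin n) (Fin n) ℂ),
      Φd (∑ i ∈ s, f i) = ∑ i ∈ s, Φd (f i) := by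
    intro s f
    rw [hΦd]
    simp only [Finset.mul_sum, Finset.sum_mul]
    rw [Finset.sum_comm]
    exact Finset.sum_congr rfl fun i _ => (hΦd (f i)).symm
  -- key off-block vanishing for Φd
  have key2 : ∀ (T : Matrix (Fin n) (Fin n) ℂ), ∀ p ∈ σρ, ∀ q ∈ σρ, ∀ s ∈ σρ, ∀ t ∈ σρ,
      ((s : ℝ) : ℂ) * ((q : ℝ) : ℂ) ≠ ((p : ℝ) : ℂ) * ((t : ℝ) : ℂ) →
      P s * Φd (P p * T * P q) * P t = 0 := by
    intro T p hp q hq s hs t ht hne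
    have h0 := hmodd (P p * T * P q)
    have lhs1 : ρ * (P p * T * P q) * ρ⁻¹
        = (((p : ℝ) : ℂ) * ((q : ℝ) : ℂ)⁻¹) • (P p * T * P q) := by
      calc ρ * (P p * T * P q) * ρ⁻¹ = (ρ * P p) * T * (P q * ρ⁻¹) := by
            simp only [mul_assoc]
        _ = (((p : ℝ) : ℂ) • P p) * T * (((q : ℝ) : ℂ)⁻¹ • P q) := by
            rw [hρP p hp, hPρi q hq]
        _ = (((p : ℝ) : ℂ) * ((q : ℝ) : ℂ)⁻¹) • (P p * T * P q) := by
            rw [smul_mul_assoc, mul_smul_comm, smul_mul_assoc, smul_smul, mul_comm]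
    rw [lhs1, hΦd_smul] at h0
    have h1 : (((p : ℝ) : ℂ) * ((q : ℝ) : ℂ)⁻¹) • (Φd (P p * T * P q) * ρ)
        = ρ * Φd (P p * T * P q) := by
      calc (((p : ℝ) : ℂ) * ((q : ℝ) : ℂ)⁻¹) • (Φd (P p * T * P q) * ρ)
          = ((((p : ℝ) : ℂ) * ((q : ℝ) : ℂ)⁻¹) • Φd (P p * T * P q)) * ρ :=
            (smul_mul_assoc _ _ _).symm
        _ = ρ * Φd (P p * T * P q) * ρ⁻¹ * ρ := by rw [h0]
        _ = ρ * Φd (P p * T * P q) := by rw [mul_assoc, hρiρ, mul_one]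
    have h2 : (((p : ℝ) : ℂ) * ((q : ℝ) : ℂ)⁻¹ * ((t : ℝ) : ℂ)) •
        (P s * Φd (P p * T * P q) * P t)
        = ((s : ℝ) : ℂ) • (P s * Φd (P p * T * P q) * P t) := by
      have b1 : P s * ((((p : ℝ) : ℂ) * ((q : ℝ) : ℂ)⁻¹) • (Φd (P p * T * P q) * ρ)) * P t
          = (((p : ℝ) : ℂ) * ((q : ℝ) : ℂ)⁻¹ * ((t : ℝ) : ℂ)) •
            (P s * Φd (P p * T * P q) * P t) := by
        rw [mul_smul_comm, smul_mul_assoc]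
        rw [show P s * (Φd (P p * T * P q) * ρ) * P t
            = P s * Φd (P p * T * P q) * (ρ * P t) by simp only [mul_assoc]]
        rw [hρP t ht, mul_smul_comm, smul_smul]
      have b2 : P s * (ρ * Φd (P p * T * P q)) * P t
          = ((s : ℝ) : ℂ) • (P s * Φd (P p * T * P q) * P t) := by
        rw [show P s * (ρ * Φd (P p * T * P q)) * P t
            = (P s * ρ) * Φd (P p * T * P q) * P t by simp only [mul_assoc]]
        rw [hPρ s hs, smul_mul_assoc, smul_mul_assoc]
      rw [← b1, ← b2, h1]
    have hsc : ((p : ℝ) : ℂ) * ((q : ℝ) : ℂ)⁻¹ * ((t : ℝ) : ℂ) ≠ ((s : ℝ) : ℂ) := by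
      intro h
      apply hne
      field_simp [hq0 q hq] at h
      linear_combination -h
    have e2 : (((p : ℝ) : ℂ) * ((q : ℝ) : ℂ)⁻¹ * ((t : ℝ) : ℂ) - ((s : ℝ) : ℂ)) •
        (P s * Φd (P p * T * P q) * P t) = 0 := by
      rw [sub_smul, h2, sub_self]
    rcases smul_eq_zero.mp e2 with h | h
    · exact absurd (sub_eq_zero.mp h) hsc
    · exact h
  -- diagonal blocks stay diagonal
  have blockdiag : ∀ (T : Matrix (Fin n) (Fin n) ℂ), ∀ p ∈ σρ,
      Φd (P p * T * P p) = ∑ s ∈ σρ, P s * Φd (P p * T * P p) * P s := by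
    intro T p hp
    calc Φd (P p * T * P p) = 1 * Φd (P p * T * P p) * 1 := by rw [one_mul, mul_one]
      _ = (∑ s ∈ σρ, P s) * Φd (P p * T * P p) * (∑ t ∈ σρ, P t) := by rw [hPsum]
      _ = ∑ s ∈ σρ, ∑ t ∈ σρ, P s * Φd (P p * T * P p) * P t := by
          simp only [Finset.sum_mul, Finset.mul_sum]
          rw [Finset.sum_comm]
      _ = ∑ s ∈ σρ, P s * Φd (P p * T * P p) * P s := by
          refine Finset.sum_congr rfl fun s hs => ?_
          refine Finset.sum_eq_single s (fun t ht hts => ?_) (fun h => absurd hs h)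
          refine key2 T p hp p hp s hs t ht ?_
          intro h
          have h' : s * p = p * t := by exact_mod_cast h
          exact hts (mul_left_cancel₀ (ne_of_gt (hpos p hp)) (by linarith)).symm
  -- off-diagonal blocks are killed by Diag
  have offdiag : ∀ (T : Matrix (Fin n) (Fin n) ℂ), ∀ p ∈ σρ, ∀ q ∈ σρ, p ≠ q →
      ∑ s ∈ σρ, P s * Φd (P p * T * P q) * P s = 0 := by
    intro T p hp q hq hpq
    refine Finset.sum_eq_zero fun s hs => key2 T p hp q hq s hs s hs ?_
    intro h
    have h' : s * q = p * s := by exact_mod_cast h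
    exact hpq (mul_left_cancel₀ (ne_of_gt (hpos s hs)) (by linarith)).symm
  -- resolution of identity on T
  have hT : ∀ T : Matrix (Fin n) (Fin n) ℂ,
      T = ∑ p ∈ σρ, ∑ q ∈ σρ, P p * T * P q := by
    intro T
    calc T = 1 * T * 1 := by rw [one_mul, mul_one]
      _ = (∑ p ∈ σρ, P p) * T * (∑ q ∈ σρ, P q) := by rw [hPsum]
      _ = ∑ p ∈ σρ, ∑ q ∈ σρ, P p * T * P q := by
          simp only [Finset.sum_mul, Finset.mul_sum]
          rw [Finset.sum_comm]
  -- F2 : Diag commutes with Φd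
  have F2 : ∀ T : Matrix (Fin n) (Fin n) ℂ,
      ∑ s ∈ σρ, P s * Φd T * P s = Φd (∑ p ∈ σρ, P p * T * P p) := by
    intro T
    have step1 : ∑ s ∈ σρ, P s * Φd T * P s
        = ∑ p ∈ σρ, ∑ q ∈ σρ, ∑ s ∈ σρ, P s * Φd (P p * T * P q) * P s := by
      conv_lhs => rw [show Φd T = ∑ p ∈ σρ, ∑ q ∈ σρ, Φd (P p * T * P q) by
        rw [show (∑ p ∈ σρ, ∑ q ∈ σρ, Φd (P p * T * P q))
            = ∑ p ∈ σρ, Φd (∑ q ∈ σρ, P p * T * P q) from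
          Finset.sum_congr rfl fun p _ => (hΦd_sum _ _).symm, ← hΦd_sum, ← hT]]
      simp only [Finset.mul_sum, Finset.sum_mul]
      rw [Finset.sum_comm]
      refine Finset.sum_congr rfl fun p _ => ?_
      rw [Finset.sum_comm]
    rw [step1]
    have step2 : ∀ p ∈ σρ, ∑ q ∈ σρ, ∑ s ∈ σρ, P s * Φd (P p * T * P q) * P s
        = Φd (P p * T * P p) := by
      intro p hp
      rw [Finset.sum_eq_single p (fun q hq hqp => offdiag T p hp q hq (Ne.symm hqp))
        (fun h => absurd hp h)]
      exact (blockdiag T p hp).symm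
    rw [Finset.sum_congr rfl step2, ← hΦd_sum]
  -- final assembly
  intro T
  rw [hDiag, hDiag, hL, hL]
  have A1 : ∑ s ∈ σρ, P s * (H * T) * P s = H * ∑ p ∈ σρ, P p * T * P p := by
    rw [Finset.mul_sum]
    refine Finset.sum_congr rfl fun s hs => ?_
    simp only [← mul_assoc]
    rw [(hHP s hs).symm]
  have A2 : ∑ s ∈ σρ, P s * (T * H) * P s = (∑ p ∈ σρ, P p * T * P p) * H := by
    rw [Finset.sum_mul]
    refine Finset.sum_congr rfl fun s hs => ?_
    simp only [mul_assoc]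
    rw [hHP s hs]
  have A3 : ∑ s ∈ σρ, P s * (Φ 1 * T) * P s = Φ 1 * ∑ p ∈ σρ, P p * T * P p := by
    rw [Finset.mul_sum]
    refine Finset.sum_congr rfl fun s hs => ?_
    simp only [← mul_assoc]
    rw [(hΦ1P s hs).symm]
  have A4 : ∑ s ∈ σρ, P s * (T * Φ 1) * P s = (∑ p ∈ σρ, P p * T * P p) * Φ 1 := by
    rw [Finset.sum_mul]
    refine Finset.sum_congr rfl fun s hs => ?_
    simp only [mul_assoc]
    rw [hΦ1P s hs]
  have A5 := F2 T
  calc ∑ s ∈ σρ, P s * (-(Complex.I • (H * T - T * H)) + Φd T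
        - (1/2 : ℂ) • (Φ 1 * T + T * Φ 1)) * P s
      = -(Complex.I • ((∑ s ∈ σρ, P s * (H * T) * P s) - ∑ s ∈ σρ, P s * (T * H) * P s))
        + (∑ s ∈ σρ, P s * Φd T * P s)
        - (1/2 : ℂ) • ((∑ s ∈ σρ, P s * (Φ 1 * T) * P s)
          + ∑ s ∈ σρ, P s * (T * Φ 1) * P s) := by
        simp only [mul_add, add_mul, mul_sub, sub_mul, mul_neg, neg_mul,
          mul_smul_comm, smul_mul_assoc, smul_sub, smul_add,
          Finset.sum_add_distrib, Finset.sum_sub_distrib, neg_sub,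
          Finset.sum_neg_distrib, ← Finset.smul_sum]
    _ = -(Complex.I • (H * (∑ p ∈ σρ, P p * T * P p)
          - (∑ p ∈ σρ, P p * T * P p) * H))
        + Φd (∑ p ∈ σρ, P p * T * P p)
        - (1/2 : ℂ) • (Φ 1 * (∑ p ∈ σρ, P p * T * P p)
          + (∑ p ∈ σρ, P p * T * P p) * Φ 1) := by
        rw [A1, A2, A3, A4, A5]
end

section
/- For s ∈ [0,1], say (ρ,L) satisfies the ρ_s-detailed balance condition if the CP map Φ associated to L is self-adjoint for the inner product ⟨A,B⟩_{ρ_s} = tr(ρ^s A* ρ^{1−s} B). If Φ is ρ_s-self-adjoint and [Φ, Δ_ρ] = 0 (where Δ_ρ(X) = ρXρ⁻¹), then Φ†(ρ) = ρΦ(𝟙), where Φ† is the adjoint of Φ for the trace duality. -/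
open Matrix
open scoped ComplexOrder

/-- If `A` commutes with `P * P` for a positive definite `P`, then `A` commutes with `P`. -/
lemma comm_of_sq_comm {n : ℕ} (P A : Matrix (Fin n) (Fin n) ℂ) (hP : P.PosDef)
    (h : A * (P * P) = (P * P) * A) : A * P = P * A := by
  have hH : P.IsHermitian := hP.1
  set V : Matrix (Fin n) (Fin n) ℂ := (hH.eigenvectorUnitary : Matrix (Fin n) (Fin n) ℂ) with hV
  have h1 : star V * V = 1 := Matrix.UnitaryGroup.star_mul_self hH.eigenvectorUnitary
  have h2 : V * star V = 1 := mul_eq_one_comm.mp h1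
  have hcancel : ∀ X : Matrix (Fin n) (Fin n) ℂ, star V * (V * X) = X := fun X => by
    rw [← Matrix.mul_assoc, h1, Matrix.one_mul]
  have hcancel' : ∀ X : Matrix (Fin n) (Fin n) ℂ, V * (star V * X) = X := fun X => by
    rw [← Matrix.mul_assoc, h2, Matrix.one_mul]
  set d : Fin n → ℂ := fun i => (hH.eigenvalues i : ℂ) with hd
  set D : Matrix (Fin n) (Fin n) ℂ := diagonal d with hD
  have hspec : P = V * D * star V := by
    simpa [hV, hD, hd, Function.comp_def] using hH.spectral_theorem
  set B : Matrix (Fin n) (Fin n) ℂ := star V * A * V with hB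
  have hA' : V * B * star V = A := by
    simp only [hB, Matrix.mul_assoc, hcancel', h2, Matrix.mul_one]
  have hPP : P * P = V * (D * D) * star V := by
    conv_lhs => rw [hspec]
    simp only [Matrix.mul_assoc, hcancel]
  have key : B * (D * D) = (D * D) * B := by
    have h' : A * (V * (D * D) * star V) = (V * (D * D) * star V) * A := by
      rw [← hPP]; exact h
    have e : star V * (A * (V * (D * D) * star V)) * V
        = star V * ((V * (D * D) * star V) * A) * V := by rw [h']
    simp only [Matrix.mul_assoc, hcancel, h1, Matrix.mul_one] at e
    simp only [hB, Matrix.mul_assoc]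
    exact e
  have hBD : B * D = D * B := by
    ext i j
    have hk : (B * (D * D)) i j = ((D * D) * B) i j := by rw [key]
    have hdd : D * D = diagonal (fun i => d i * d i) := by
      rw [hD, Matrix.diagonal_mul_diagonal]
    rw [hdd, Matrix.mul_diagonal, Matrix.diagonal_mul] at hk
    rw [hD, Matrix.mul_diagonal, Matrix.diagonal_mul]
    by_cases hBij : B i j = 0
    · simp [hBij]
    · have hij : d i = d j := by
        have h2' : d j * d j = d i * d i := by
          have h0 : (d j * d j - d i * d i) * B i j = 0 := by linear_combination hk
          rcases mul_eq_zero.mp h0 with h0 | h0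
          · exact sub_eq_zero.mp h0
          · exact absurd h0 hBij
        have hji : (hH.eigenvalues j : ℂ) ^ 2 = (hH.eigenvalues i : ℂ) ^ 2 := by
          simpa [hd, sq] using h2'
        have hji' : (hH.eigenvalues j) ^ 2 = (hH.eigenvalues i) ^ 2 := by
          exact_mod_cast hji
        have hpi := hP.eigenvalues_pos i
        have hpj := hP.eigenvalues_pos j
        have : hH.eigenvalues i = hH.eigenvalues j := by
          nlinarith
        simp [hd, this]
      rw [hij]; ring
  have l1 : A * P = V * (B * (D * star V)) := by
    rw [← hA', hspec]; simp only [Matrix.mul_assoc, hcancel]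
  have l2 : P * A = V * (D * (B * star V)) := by
    rw [← hA', hspec]; simp only [Matrix.mul_assoc, hcancel]
  rw [l1, l2, ← Matrix.mul_assoc B, hBD, Matrix.mul_assoc]

/-- if the CP map `Φ` is `ρ_s`-self-adjoint, i.e.
`Φ(X) = ρ^{s−1} Φ†(ρ^{1−s} X ρ^s) ρ^{−s}` (with `Φ†` the trace dual of `Φ`), and
`[Φ, Δ_ρ] = 0` where `Δ_ρ(X) = ρXρ⁻¹`, then `Φ†(ρ) = ρ Φ(𝟙)`. The real powers of the
faithful density matrix `ρ` are encoded by the continuous one-parameter group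
`R : ℝ → Matrix` of positive definite matrices with `R 1 = ρ` (so `R x = ρ^x`). -/
theorem stmt7 {n : ℕ} {ι : Type*} [Fintype ι]
    (ρ : Matrix (Fin n) (Fin n) ℂ) (hρ : ρ.PosDef) (hρtr : ρ.trace = 1)
    (R : ℝ → Matrix (Fin n) (Fin n) ℂ)
    (hRgrp : ∀ x y, R (x + y) = R x * R y) (hR0 : R 0 = 1) (hR1 : R 1 = ρ)
    (hRpos : ∀ x, (R x).PosDef) (hRcont : Continuous R)
    (Γ : ι → Matrix (Fin n) (Fin n) ℂ)
    (Φ Φd : Matrix (Fin n) (Fin n) ℂ → Matrix (Fin n) (Fin n) ℂ)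
    (hΦ : ∀ X, Φ X = ∑ l, (Γ l)ᴴ * X * Γ l)
    (hΦd : ∀ X, Φd X = ∑ l, Γ l * X * (Γ l)ᴴ)
    (s : ℝ) (hs : s ∈ Set.Icc (0:ℝ) 1)
    (hsa : ∀ X, Φ X = R (s - 1) * Φd (R (1 - s) * X * R s) * R (-s))
    (hmod : ∀ X, Φ (ρ * X * ρ⁻¹) = ρ * Φ X * ρ⁻¹) :
    Φd ρ = ρ * Φ 1 := by
  -- basic group facts
  have hinv : ∀ x, R x * R (-x) = 1 := fun x => by
    rw [← hRgrp]; simp [hR0]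
  have hinv' : ∀ x, R (-x) * R x = 1 := fun x => by
    rw [← hRgrp]; simp [hR0]
  have hρinv : ρ⁻¹ = R (-1) := by
    apply Matrix.inv_eq_right_inv
    rw [← hR1]; exact hinv 1
  -- Φ 1 commutes with ρ = R 1
  set A : Matrix (Fin n) (Fin n) ℂ := Φ 1 with hA
  have hcomm1 : A * R 1 = R 1 * A := by
    have h := hmod 1
    have e1 : ρ * 1 * ρ⁻¹ = 1 := by
      rw [Matrix.mul_one, hρinv, ← hR1]; exact hinv 1
    rw [e1] at h
    have := congrArg (fun X => X * ρ) h
    simp only [Matrix.mul_assoc] at this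
    rw [hρinv, ← hR1, hinv' 1, Matrix.mul_one] at this
    exact this
  -- commute with R (x/2) from commute with R x
  have halfstep : ∀ x, A * R x = R x * A → A * R (x / 2) = R (x / 2) * A := by
    intro x hx
    refine comm_of_sq_comm _ _ (hRpos (x / 2)) ?_
    rw [← hRgrp, add_halves]
    exact hx
  -- commute with R (1/2^k)
  have hdy2 : ∀ k : ℕ, A * R (1 / 2 ^ k) = R (1 / 2 ^ k) * A := by
    intro k
    induction k with
    | zero => simpa using hcomm1
    | succ k ih =>
      have e : (1:ℝ) / 2 ^ (k + 1) = (1 / 2 ^ k) / 2 := by ring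
      rw [e]; exact halfstep _ ih
  have hmul : ∀ x y, A * R x = R x * A → A * R y = R y * A →
      A * R (x + y) = R (x + y) * A := by
    intro x y hx hy
    rw [hRgrp, ← Matrix.mul_assoc, hx, Matrix.mul_assoc, hy, ← Matrix.mul_assoc]
  -- commute with R (m / 2^k)
  have hnat : ∀ (m k : ℕ), A * R ((m : ℝ) / 2 ^ k) = R ((m : ℝ) / 2 ^ k) * A := by
    intro m k
    induction m with
    | zero => simp [hR0]
    | succ m ih =>
      have e : ((m + 1 : ℕ) : ℝ) / 2 ^ k = (m : ℝ) / 2 ^ k + 1 / 2 ^ k := by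
        push_cast; ring
      rw [e]; exact hmul _ _ ih (hdy2 k)
  -- pass to the limit: A commutes with R s
  have hcomms : A * R s = R s * A := by
    have hxk : Filter.Tendsto (fun k : ℕ => (⌊s * 2 ^ k⌋₊ : ℝ) / 2 ^ k)
        Filter.atTop (nhds s) := by
      have h1 := tendsto_nat_floor_mul_div_atTop (R := ℝ) hs.1
      have h2 : Filter.Tendsto (fun k : ℕ => (2:ℝ) ^ k) Filter.atTop Filter.atTop :=
        tendsto_pow_atTop_atTop_of_one_lt one_lt_two
      exact h1.comp h2
    have hLc : Continuous fun x : ℝ => A * R x := continuous_const.matrix_mul hRcont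
    have hRc : Continuous fun x : ℝ => R x * A := hRcont.matrix_mul continuous_const
    have hL : Filter.Tendsto (fun k : ℕ => A * R ((⌊s * 2 ^ k⌋₊ : ℝ) / 2 ^ k))
        Filter.atTop (nhds (A * R s)) := (hLc.tendsto s).comp hxk
    have hR' : Filter.Tendsto (fun k : ℕ => R ((⌊s * 2 ^ k⌋₊ : ℝ) / 2 ^ k) * A)
        Filter.atTop (nhds (R s * A)) := (hRc.tendsto s).comp hxk
    have heq : (fun k : ℕ => A * R ((⌊s * 2 ^ k⌋₊ : ℝ) / 2 ^ k))
        = fun k : ℕ => R ((⌊s * 2 ^ k⌋₊ : ℝ) / 2 ^ k) * A := by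
      funext k; exact hnat _ k
    rw [heq] at hL
    exact tendsto_nhds_unique hL hR'
  -- conclude from the self-adjointness relation at X = 1
  have h1 := hsa 1
  have e1 : R (1 - s) * 1 * R s = ρ := by
    rw [Matrix.mul_one, ← hRgrp]; norm_num [hR1]
  rw [e1] at h1
  -- Φ 1 = R (s-1) * Φd ρ * R (-s); solve for Φd ρ
  have h2 := congrArg (fun X => R (1 - s) * X * R s) h1
  simp only [Matrix.mul_assoc] at h2
  have e2 : R (1 - s) * (R (s - 1) * (Φd ρ * (R (-s) * R s))) = Φd ρ := by
    rw [hinv' s, Matrix.mul_one, ← Matrix.mul_assoc, ← hRgrp]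
    norm_num [hR0]
  rw [e2] at h2
  -- now Φd ρ = R (1-s) * Φ 1 * R s = R (1-s) * R s * Φ 1 = ρ * Φ 1
  rw [← h2, ← hA, ← Matrix.mul_assoc, Matrix.mul_assoc _ A, hcomms,
    ← Matrix.mul_assoc, ← hRgrp]
  norm_num [hR1]
end

section
/- Counter-example to the KMS detailed balance implication: On H = ℂ², with Pauli matrices σ₁, σ₂, σ₃ and parameters κ ∈ (0,1), ω ∈ ℝ\{0}, s = ω(1+κ)/(1−κ), r = ω√((1+κ)/(1−κ)), set H = κω σ₁, Γ = √(1−κ²) 𝟙 + i r σ₁ + s σ₂ + σ₃, ρ = ½(𝟙 − √(1−κ²) σ₃), and L†(X) = i[H,X] − ½{Γ*Γ, X} + Γ*XΓ. Then: (a) L(ρ) = 0, (b) ρ^{1/2} Γ* ρ^{−1/2} = Γ (so the KMS detailed balance condition holds), but (c) [H, ρ] ≠ 0. -/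
open Matrix
open scoped ComplexOrder

set_option maxHeartbeats 1000000
/-- counter-example to the KMS detailed balance implication: on `ℂ²`,
with the Pauli matrices, `κ ∈ (0,1)`, `ω ≠ 0`, `s = ω(1+κ)/(1−κ)`,
`r = ω√((1+κ)/(1−κ))`, `H = κω σ₁`, `Γ = √(1−κ²) 𝟙 + i r σ₁ + s σ₂ + σ₃`,
`ρ = ½(𝟙 − √(1−κ²) σ₃)` and `L(σ) = −i[H,σ] + ΓσΓ* − ½{Γ*Γ, σ}` (the predual of
`L†(X) = i[H,X] − ½{Γ*Γ,X} + Γ*XΓ`): (a) `L(ρ) = 0`; (b) `ρ^{1/2} Γ* ρ^{−1/2} = Γ`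
(KMS detailed balance), where `ρ^{1/2} = diag(√ν, √(1−ν))` with `ν = (1−√(1−κ²))/2`;
but (c) `[H, ρ] ≠ 0`. -/
theorem stmt8 (κ ω : ℝ) (hκ : κ ∈ Set.Ioo (0:ℝ) 1) (hω : ω ≠ 0)
    (s r ν : ℝ)
    (hs : s = ω * (1 + κ) / (1 - κ))
    (hr : r = ω * Real.sqrt ((1 + κ) / (1 - κ)))
    (hν : ν = (1 - Real.sqrt (1 - κ^2)) / 2)
    (σ1 σ2 σ3 H Γm ρ ρhalf : Matrix (Fin 2) (Fin 2) ℂ)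
    (hσ1 : σ1 = !![0, 1; 1, 0])
    (hσ2 : σ2 = !![0, -Complex.I; Complex.I, 0])
    (hσ3 : σ3 = !![1, 0; 0, -1])
    (hH : H = ((κ * ω : ℝ) : ℂ) • σ1)
    (hΓ : Γm = ((Real.sqrt (1 - κ^2) : ℝ) : ℂ) • 1
        + (Complex.I * (r : ℝ)) • σ1 + ((s : ℝ) : ℂ) • σ2 + σ3)
    (hρ : ρ = (1/2 : ℂ) • (1 - ((Real.sqrt (1 - κ^2) : ℝ) : ℂ) • σ3))
    (hρhalf : ρhalf = !![((Real.sqrt ν : ℝ) : ℂ), 0; 0, ((Real.sqrt (1 - ν) : ℝ) : ℂ)])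
    (L : Matrix (Fin 2) (Fin 2) ℂ → Matrix (Fin 2) (Fin 2) ℂ)
    (hL : ∀ X, L X = -(Complex.I • (H * X - X * H)) + Γm * X * Γmᴴ
        - (1/2 : ℂ) • (Γmᴴ * Γm * X + X * (Γmᴴ * Γm))) :
    L ρ = 0 ∧ ρhalf * ρhalf = ρ ∧ ρhalf * Γmᴴ * ρhalf⁻¹ = Γm ∧ H * ρ ≠ ρ * H := by
  obtain ⟨hκ0, hκ1⟩ := hκ
  set c := Real.sqrt (1 - κ^2) with hc
  have h1κ : (0:ℝ) < 1 - κ := by linarith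
  have h1κ2 : (0:ℝ) < 1 - κ^2 := by nlinarith
  have hc2 : c^2 = 1 - κ^2 := Real.sq_sqrt h1κ2.le
  have hc0 : 0 < c := Real.sqrt_pos.mpr h1κ2
  have hc1 : c < 1 := by nlinarith
  have hrc : r * (1 - κ) = c * ω := by
    have h1 : Real.sqrt ((1+κ)/(1-κ)) = Real.sqrt (1+κ) / Real.sqrt (1-κ) :=
      Real.sqrt_div (by linarith) _
    have h2 : c = Real.sqrt (1-κ) * Real.sqrt (1+κ) := by
      rw [hc, ← Real.sqrt_mul (by linarith : (0:ℝ) ≤ 1-κ)]; ring_nf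
    have h3 : Real.sqrt (1-κ) ^ 2 = 1-κ := Real.sq_sqrt h1κ.le
    have h4 : Real.sqrt (1-κ) ≠ 0 := by positivity
    rw [hr, h1, h2]
    field_simp
    linear_combination -h3
  have hs' : s * (1 - κ) = ω * (1 + κ) := by rw [hs]; field_simp
  have hν' : ν = (1 - c)/2 := hν
  have hν0 : 0 < ν := by rw [hν']; linarith
  have hν1 : ν < 1 := by rw [hν']; linarith
  set a := Real.sqrt ν with ha
  set b := Real.sqrt (1-ν) with hb
  have ha2 : a^2 = ν := Real.sq_sqrt hν0.le
  have hb2 : b^2 = 1-ν := Real.sq_sqrt (by linarith)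
  have ha0 : 0 < a := Real.sqrt_pos.mpr hν0
  have hb0 : 0 < b := Real.sqrt_pos.mpr (by linarith)
  have id1 : c*(r^2+s^2) = 2*(r*s) := by
    have h : (c*(r^2+s^2) - 2*(r*s)) * (1-κ)^2 = 0 := by
      linear_combination (c*(r*(1-κ)+c*ω) - 2*s*(1-κ))*hrc
        + (c*(s*(1-κ)+ω*(1+κ)) - 2*c*ω)*hs' + c*ω^2*hc2
    have h2 : (1-κ)^2 ≠ 0 := by positivity
    have := (mul_eq_zero.mp h).resolve_right h2
    linarith
  have id2 : κ*ω*c + (1+κ^2)*r = c*s := by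
    have h : (κ*ω*c + (1+κ^2)*r - c*s) * (1-κ) = 0 := by
      linear_combination (1+κ^2)*hrc - c*hs'
    have := (mul_eq_zero.mp h).resolve_right (by positivity)
    linarith
  have id3 : a*(r+s) = b*(s-r) := by
    have hXY : (a*(r+s))^2 - (b*(s-r))^2 = 0 := by
      rw [mul_pow, mul_pow, ha2, hb2, hν']
      linear_combination -id1
    have hsum : a*(r+s) + b*(s-r) ≠ 0 := by
      intro h0
      have h1 : (a*(r+s) + b*(s-r))*(1-κ) = ω*(a*(c+1+κ) + b*(1+κ-c)) := by
        linear_combination (a-b)*hrc + (a+b)*hs'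
      rw [h0, zero_mul] at h1
      have hpos : 0 < a*(c+1+κ) + b*(1+κ-c) := by nlinarith
      rcases mul_eq_zero.mp h1.symm with h|h
      · exact hω h
      · linarith
    rcases mul_eq_zero.mp
        (show (a*(r+s) - b*(s-r))*(a*(r+s)+b*(s-r)) = 0 by linear_combination hXY) with h|h
    · linarith
    · exact absurd h hsum
  -- explicit matrices
  have hH' : H = !![0, ((κ*ω:ℝ):ℂ); ((κ*ω:ℝ):ℂ), 0] := by
    rw [hH, hσ1]; ext i j; fin_cases i <;> fin_cases j <;> simp
  have hΓ' : Γm = !![(c:ℂ)+1, Complex.I*((r:ℂ)-(s:ℂ));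
      Complex.I*((r:ℂ)+(s:ℂ)), (c:ℂ)-1] := by
    rw [hΓ, hσ1, hσ2, hσ3]; ext i j; fin_cases i <;> fin_cases j <;>
      simp [Matrix.one_apply] <;> ring
  have hΓH : Γmᴴ = !![(c:ℂ)+1, -(Complex.I*((r:ℂ)+(s:ℂ)));
      -(Complex.I*((r:ℂ)-(s:ℂ))), (c:ℂ)-1] := by
    rw [hΓ']; ext i j; fin_cases i <;> fin_cases j <;>
      simp [conjTranspose_apply, Complex.ext_iff]
  have hρ' : ρ = !![((ν:ℝ):ℂ), 0; 0, ((1-ν:ℝ):ℂ)] := by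
    rw [hρ, hσ3, hν']; ext i j; fin_cases i <;> fin_cases j <;>
      simp [Matrix.one_apply] <;> push_cast <;> ring
  have hρh' : ρhalf = !![((a:ℝ):ℂ), 0; 0, ((b:ℝ):ℂ)] := hρhalf
  have haC : ((a:ℝ):ℂ) ≠ 0 := by exact_mod_cast ha0.ne'
  have hbC : ((b:ℝ):ℂ) ≠ 0 := by exact_mod_cast hb0.ne'
  have hinv : ρhalf⁻¹ = !![((a:ℝ):ℂ)⁻¹, 0; 0, ((b:ℝ):ℂ)⁻¹] := by
    apply inv_eq_right_inv
    rw [hρh']; ext i j; fin_cases i <;> fin_cases j <;>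
      simp [Matrix.mul_apply, Fin.sum_univ_two, Matrix.one_apply, haC, hbC]
  refine ⟨?_, ?_, ?_, ?_⟩
  · -- L ρ = 0
    rw [hL, hΓH, hH', hΓ', hρ']
    ext i j
    fin_cases i <;> fin_cases j <;>
      simp [Matrix.mul_apply, Fin.sum_univ_two, Complex.ext_iff] <;>
      push_cast <;> ring_nf
    all_goals first
      | linear_combination (2*r*c - 2*r^2 + 2*s - 2*s^2 - 2*(κ*ω))*hν' + id1 + id2 - r*hc2
      | linear_combination (2*(κ*ω) - 2*(c*r) - 2*s)*hν' - id2 + r*hc2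
      | linear_combination -((2*(κ*ω) - 2*(c*r) - 2*s)*hν' - id2 + r*hc2)
      | linear_combination (4*(κ*ω) - 4*(c*r) - 4*s)*hν' - 2*id2 + 2*r*hc2
      | linear_combination -((4*(κ*ω) - 4*(c*r) - 4*s)*hν' - 2*id2 + 2*r*hc2)
      | linear_combination (2*r^2+2*s^2)*hν' - id1
      | linear_combination -((2*r^2+2*s^2)*hν' - id1)
      | linear_combination (2*(κ*ω) - 2*c*r + 2*r^2 - 2*s + 2*s^2)*hν' - id1 - id2 + r*hc2
      | linear_combination (-2*(κ*ω) + 2*r*c + 2*r^2 + 2*s + 2*s^2)*hν' - id1 + id2 - r*hc2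
      | linear_combination (4*(κ*ω) - 4*c*r - 2*r^2 - 4*s - 2*s^2)*hν' + id1 - 2*id2 + 2*r*hc2
      | linear_combination (-4*(κ*ω) + 4*c*r + 2*r^2 + 4*s + 2*s^2)*hν' - id1 + 2*id2 - 2*r*hc2
      | linear_combination (-2*r^2 - 2*s^2)*hν' + id1
      | linear_combination (2*r^2 + 2*s^2)*hν' - id1
      | linear_combination (2*(κ*ω) - 2*c*r - 2*r^2 - 2*s - 2*s^2)*hν' + (1/2)*id1 - id2 + r*hc2
      | linear_combination (-2*(κ*ω) + 2*r*c - 2*r^2 + 2*s - 2*s^2)*hν' + id1 + id2 - r*hc2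
  · -- ρhalf * ρhalf = ρ
    rw [hρh', hρ']
    ext i j
    fin_cases i <;> fin_cases j <;>
      simp [Matrix.mul_apply, Fin.sum_univ_two] <;> push_cast
    · exact_mod_cast congrArg (Complex.ofReal) (by nlinarith : a*a = ν)
    · exact_mod_cast congrArg (Complex.ofReal) (by nlinarith : b*b = 1-ν)
  · -- KMS
    rw [hΓH, hinv, hρh', hΓ']
    ext i j
    fin_cases i <;> fin_cases j <;>
      simp [Matrix.mul_apply, Fin.sum_univ_two, haC, hbC, Complex.ext_iff] <;>
      push_cast <;> ring_nf
    all_goals field_simp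
    all_goals first
      | linear_combination id3
      | linear_combination -id3
      | linear_combination b*id3
      | linear_combination -(b*id3)
      | linear_combination a*id3
      | linear_combination -(a*id3)
      | ring
  · -- H ρ ≠ ρ H
    intro h
    rw [hH', hρ'] at h
    have := congrFun (congrFun h 0) 1
    simp [Matrix.mul_apply, Fin.sum_univ_two] at this
    have h2 : κ*ω*(1-ν) = ν*(κ*ω) := by exact_mod_cast this
    have : ν ≠ 1/2 := by rw [hν']; intro h3; linarith
    rcases mul_eq_zero.mp (show (κ*ω)*(1-2*ν) = 0 by linarith) with h4|h4
    · rcases mul_eq_zero.mp h4 with h5|h5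
      · linarith
      · exact hω h5
    · apply this; linarith
end

section
/- Suppose detailed balance holds for (ρ⁺, L) (so that Diag_{S⁺} ∘ L = L ∘ Diag_{S⁺} with S⁺ = −log ρ⁺). Then for any initial state ρ₀, the expected two-time-measurement variation of S⁺ equals the difference of quantum expectations without decoherence: E^t_{ρ₀}(ΔS⁺) = tr(S⁺ e^{tL}(ρ₀)) − tr(S⁺ ρ₀). -/
open Matrix
open scoped ComplexOrder

attribute [local instance] Matrix.normedAddCommGroup Matrix.normedSpace

/-- suppose detailed balance holds for `(ρ⁺, L)`, so that
`Diag_{S⁺} ∘ L = L ∘ Diag_{S⁺}` with `S⁺ = −log ρ⁺` (spectral family `P_s`,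
`ρ⁺ = Σ_s e^{−s} P_s`, `S⁺ = Σ_s s P_s`). Then for any initial state `ρ₀`,
`E^t_{ρ₀}(ΔS⁺) = tr(S⁺ e^{tL}(Diag_{S⁺}(ρ₀))) − tr(S⁺ρ₀)
  = tr(S⁺ e^{tL}(ρ₀)) − tr(S⁺ ρ₀)`: there is no decoherence effect. -/
theorem stmt11 {n : ℕ}
    (σS : Finset ℝ) (P : ℝ → Matrix (Fin n) (Fin n) ℂ)
    (hPh : ∀ s ∈ σS, (P s)ᴴ = P s)
    (hPo : ∀ s ∈ σS, ∀ s' ∈ σS, P s * P s' = if s = s' then P s else 0)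
    (hPsum : ∑ s ∈ σS, P s = 1)
    (ρplus Splus : Matrix (Fin n) (Fin n) ℂ)
    (hρplus : ρplus = ∑ s ∈ σS, (Real.exp (-s) : ℂ) • P s)
    (hSplus : Splus = ∑ s ∈ σS, (s : ℂ) • P s)
    (L : Matrix (Fin n) (Fin n) ℂ →ₗ[ℂ] Matrix (Fin n) (Fin n) ℂ)
    (hsteady : L ρplus = 0)
    (Diag : Matrix (Fin n) (Fin n) ℂ → Matrix (Fin n) (Fin n) ℂ)
    (hDiag : ∀ T, Diag T = ∑ s ∈ σS, P s * T * P s)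
    (hcommL : ∀ T, Diag (L T) = L (Diag T))
    (E : ℝ → (Matrix (Fin n) (Fin n) ℂ →ₗ[ℂ] Matrix (Fin n) (Fin n) ℂ))
    (hE0 : E 0 = LinearMap.id)
    (hEder : ∀ X t, HasDerivAt (fun u => E u X) (L (E t X)) t)
    (ρ₀ : Matrix (Fin n) (Fin n) ℂ) (hρ₀ : ρ₀.PosSemidef) (hρ₀tr : ρ₀.trace = 1)
    (t : ℝ) (ht : 0 ≤ t) :
    (Splus * E t (Diag ρ₀)).trace - (Splus * ρ₀).trace
      = (Splus * E t ρ₀).trace - (Splus * ρ₀).trace := by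
  -- Key algebraic fact: tr(S⁺ · Diag X) = tr(S⁺ · X) for all X.
  have key : ∀ X : Matrix (Fin n) (Fin n) ℂ,
      (Splus * Diag X).trace = (Splus * X).trace := by
    intro X
    have hSP : ∀ s ∈ σS, P s * Splus = (s : ℂ) • P s := by
      intro s hs
      rw [hSplus, Finset.mul_sum]
      rw [Finset.sum_eq_single s]
      · rw [mul_smul_comm, hPo s hs s hs, if_pos rfl]
      · intro s' hs' hne
        rw [mul_smul_comm, hPo s hs s' hs', if_neg (Ne.symm hne), smul_zero]
      · intro h; exact absurd hs h
    rw [hDiag, Finset.mul_sum]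
    have step : ∀ s ∈ σS,
        (Splus * (P s * X * P s)).trace = (s : ℂ) * (P s * X).trace := by
      intro s hs
      rw [trace_mul_comm, mul_assoc, hSP s hs, mul_smul_comm, trace_smul,
        trace_mul_comm, ← mul_assoc, hPo s hs s hs, if_pos rfl, smul_eq_mul]
    rw [trace_sum, Finset.sum_congr rfl step, hSplus, Finset.sum_mul, trace_sum]
    refine Finset.sum_congr rfl fun s hs => ?_
    rw [smul_mul_assoc, trace_smul, smul_eq_mul]
  -- `Diag` as a linear map
  let D : Matrix (Fin n) (Fin n) ℂ →ₗ[ℂ] Matrix (Fin n) (Fin n) ℂ :=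
    ∑ s ∈ σS, (LinearMap.mulLeft ℂ (P s)).comp (LinearMap.mulRight ℂ (P s))
  have hD : ∀ X, D X = Diag X := by
    intro X
    rw [hDiag]
    simp [D, LinearMap.sum_apply, mul_assoc]
  -- Continuous linear maps for Lipschitz / differentiation
  let Lc := LinearMap.toContinuousLinearMap L
  let Dc := LinearMap.toContinuousLinearMap D
  -- The two curves solve the same linear ODE with the same initial condition.
  have hfg : E t (Diag ρ₀) = Dc (E t ρ₀) := by
    have huniq := ODE_solution_unique (v := fun _ x => Lc x)
      (f := fun u => E u (Diag ρ₀)) (g := fun u => Dc (E u ρ₀)) (a := 0) (b := t)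
      (fun _ => Lc.lipschitz) ?hf ?hf' ?hg ?hg' ?ha
    · exact huniq ⟨ht, le_refl t⟩
    case hf =>
      exact (HasDerivAt.continuousOn (fun u _ => hEder (Diag ρ₀) u))
    case hf' =>
      intro u _
      exact ((hEder (Diag ρ₀) u)).hasDerivWithinAt
    case hg =>
      exact HasDerivAt.continuousOn (f' := fun u => Dc (L (E u ρ₀)))
        (fun u _ => (((Dc.restrictScalars ℝ).hasFDerivAt (x := E u ρ₀)).comp_hasDerivAt u (hEder ρ₀ u) :))
    case hg' =>
      intro u _
      have h1 : HasDerivAt (fun u => Dc (E u ρ₀)) (Dc (L (E u ρ₀))) u :=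
        (((Dc.restrictScalars ℝ).hasFDerivAt (x := E u ρ₀)).comp_hasDerivAt u (hEder ρ₀ u) :)
      have h2 : Dc (L (E u ρ₀)) = Lc (Dc (E u ρ₀)) := by
        show D (L (E u ρ₀)) = L (D (E u ρ₀))
        rw [hD, hD, hcommL]
      rw [h2] at h1
      exact h1.hasDerivWithinAt
    case ha =>
      show E 0 (Diag ρ₀) = Dc (E 0 ρ₀)
      rw [hE0]
      show Diag ρ₀ = D ρ₀
      rw [hD]
  rw [hfg]
  show (Splus * D (E t ρ₀)).trace - _ = _
  rw [hD, key]
end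

section
/- Suppose (ρ, L) satisfies detailed balance, ρ₀ > 0, and S = −log ρ has simple spectrum with spectral decomposition S = Σ_s s P_s (rank-one projections). Then the matrices P(t) defined by P(t)_{ss'} = tr(P_{s'} e^{tL}(P_s)) form a semigroup of stochastic matrices: P(t)P(u) = P(t+u), P(t)_{ss'} ≥ 0, and Σ_{s'} P(t)_{ss'} = 1 for all t, u ≥ 0. -/
open Matrix
open scoped ComplexOrder

lemma aux_rank_one {n : ℕ} (P : Matrix (Fin n) (Fin n) ℂ)
    (hPh : Pᴴ = P) (hidem : P * P = P) (htr : P.trace = 1) :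
    ∃ v : Fin n → ℂ, ∀ a b, P a b = v a * star (v b) := by
  have hP : P.IsHermitian := hPh
  have hUU : star (hP.eigenvectorUnitary : Matrix (Fin n) (Fin n) ℂ) * hP.eigenvectorUnitary = 1 :=
    Unitary.coe_star_mul_self hP.eigenvectorUnitary
  have hUU' : (hP.eigenvectorUnitary : Matrix (Fin n) (Fin n) ℂ) * star (hP.eigenvectorUnitary : Matrix (Fin n) (Fin n) ℂ) = 1 :=
    Unitary.coe_mul_star_self hP.eigenvectorUnitary
  have hD := hP.conjStarAlgAut_star_eigenvectorUnitary
  rw [Unitary.conjStarAlgAut_apply, Unitary.coe_star, star_star] at hD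
  have hspec := hP.spectral_theorem
  rw [Unitary.conjStarAlgAut_apply] at hspec
  set U : Matrix (Fin n) (Fin n) ℂ := (hP.eigenvectorUnitary : Matrix (Fin n) (Fin n) ℂ)
  have hDD : diagonal (RCLike.ofReal ∘ hP.eigenvalues) * diagonal (RCLike.ofReal ∘ hP.eigenvalues)
      = (diagonal (RCLike.ofReal ∘ hP.eigenvalues) : Matrix (Fin n) (Fin n) ℂ) := by
    conv_lhs => rw [← hD]
    calc (star U * P * U) * (star U * P * U)
        = star U * (P * (U * star U) * P) * U := by noncomm_ring
      _ = star U * P * U := by rw [hUU', mul_one, hidem]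
      _ = _ := hD
  have hzo : ∀ i, hP.eigenvalues i = 0 ∨ hP.eigenvalues i = 1 := by
    intro i
    rw [diagonal_mul_diagonal] at hDD
    have h2 := congrFun (diagonal_injective hDD) i
    simp only [Pi.mul_apply, Function.comp_apply] at h2
    have h3 : hP.eigenvalues i * hP.eigenvalues i = hP.eigenvalues i := by exact_mod_cast h2
    have h4 : hP.eigenvalues i * (hP.eigenvalues i - 1) = 0 := by
      rw [mul_sub, mul_one, h3, sub_self]
    rcases mul_eq_zero.mp h4 with h | h
    · left; exact h
    · right; linarith
  have htrR : ∑ i, hP.eigenvalues i = 1 := by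
    have h1 : P.trace = ∑ i, (hP.eigenvalues i : ℂ) := by
      conv_lhs => rw [hspec]
      rw [Matrix.trace_mul_comm (U * diagonal (RCLike.ofReal ∘ hP.eigenvalues)) (star U),
        ← mul_assoc, hUU, one_mul, Matrix.trace_diagonal]
      simp
    rw [htr] at h1
    exact_mod_cast h1.symm
  classical
  have hcard : ((Finset.univ.filter (fun i => hP.eigenvalues i = 1)).card : ℝ) = 1 := by
    have hsplit := Finset.sum_filter_add_sum_filter_not Finset.univ
      (fun i => hP.eigenvalues i = 1) hP.eigenvalues
    have h1 : ∑ i ∈ Finset.univ.filter (fun i => hP.eigenvalues i = 1), hP.eigenvalues i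
        = ((Finset.univ.filter (fun i => hP.eigenvalues i = 1)).card : ℝ) := by
      rw [Finset.sum_congr rfl (fun i hi => (Finset.mem_filter.mp hi).2)]
      simp
    have h2 : ∑ i ∈ Finset.univ.filter (fun i => ¬ hP.eigenvalues i = 1), hP.eigenvalues i = 0 := by
      apply Finset.sum_eq_zero
      intro i hi
      rcases hzo i with h | h
      · exact h
      · exact absurd h (Finset.mem_filter.mp hi).2
    rw [h1, h2, add_zero] at hsplit
    rw [hsplit, htrR]
  have hcard' : (Finset.univ.filter (fun i => hP.eigenvalues i = 1)).card = 1 := by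
    exact_mod_cast hcard
  obtain ⟨i₀, hi₀⟩ := Finset.card_eq_one.mp hcard'
  have hlam1 : hP.eigenvalues i₀ = 1 := by
    have : i₀ ∈ Finset.univ.filter (fun i => hP.eigenvalues i = 1) :=
      hi₀ ▸ Finset.mem_singleton_self i₀
    exact (Finset.mem_filter.mp this).2
  have hlam0 : ∀ j, j ≠ i₀ → hP.eigenvalues j = 0 := by
    intro j hj
    rcases hzo j with h | h
    · exact h
    · exact absurd (Finset.mem_singleton.mp
        (hi₀ ▸ Finset.mem_filter.mpr ⟨Finset.mem_univ j, h⟩)) hj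
  refine ⟨fun a => U a i₀, fun a b => ?_⟩
  conv_lhs => rw [hspec]
  conv_lhs => rw [Matrix.mul_apply]
  simp only [Matrix.mul_diagonal, Function.comp_apply, Matrix.star_apply]
  rw [Finset.sum_eq_single i₀]
  · rw [hlam1]; simp [mul_comm]
  · intro x _ hx; rw [hlam0 x hx]; simp
  · intro h; exact absurd (Finset.mem_univ i₀) h

lemma aux_pinch {n : ℕ} (P M : Matrix (Fin n) (Fin n) ℂ)
    (hPh : Pᴴ = P) (hidem : P * P = P) (htr : P.trace = 1) :
    P * M * P = (P * M).trace • P := by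
  obtain ⟨v, hv⟩ := aux_rank_one P hPh hidem htr
  ext a b
  simp only [Matrix.mul_apply, Matrix.smul_apply, Matrix.trace, Matrix.diag_apply,
    smul_eq_mul, Finset.sum_mul, Finset.mul_sum, hv]
  apply Finset.sum_congr rfl
  intro x _
  apply Finset.sum_congr rfl
  intro y _
  ring

lemma aux_trace_nonneg {n : ℕ} (A : Matrix (Fin n) (Fin n) ℂ) (h : A.PosSemidef) :
    0 ≤ A.trace := by
  rw [Matrix.trace]
  apply Finset.sum_nonneg
  intro i _
  exact h.diag_nonneg
attribute [local instance] Matrix.normedAddCommGroup Matrix.normedSpace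

/-- suppose `(ρ, L)` satisfies detailed balance, `ρ₀ > 0`, and
`S = −log ρ` has simple spectrum `{s_i}` with rank-one spectral projections `P_i`
(so `ρ = Σ_i e^{−s_i} P_i`). Then the matrices `P(t)_{ij} = tr(P_j e^{tL}(P_i))` form a
semigroup of stochastic matrices: `P(t)P(u) = P(t+u)`, entries are (real and)
nonnegative, and rows sum to `1`, for `t, u ≥ 0`. The derived facts available from
detailed balance — `e^{tL}` commutes with `Diag_S`, is trace preserving and positive —
are part of the hypotheses. -/
theorem stmt13 {n : ℕ} {ι : Type*} [Fintype ι]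
    (H : Matrix (Fin n) (Fin n) ℂ) (hHh : Hᴴ = H)
    (Γ : ι → Matrix (Fin n) (Fin n) ℂ)
    (Φ Φd : Matrix (Fin n) (Fin n) ℂ → Matrix (Fin n) (Fin n) ℂ)
    (hΦ : ∀ X, Φ X = ∑ l, (Γ l)ᴴ * X * Γ l)
    (hΦd : ∀ X, Φd X = ∑ l, Γ l * X * (Γ l)ᴴ)
    (L : Matrix (Fin n) (Fin n) ℂ →ₗ[ℂ] Matrix (Fin n) (Fin n) ℂ)
    (hL : ∀ σ, L σ = -(Complex.I • (H * σ - σ * H)) + Φd σ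
        - (1/2 : ℂ) • (Φ 1 * σ + σ * Φ 1))
    (s : Fin n → ℝ) (hs : Function.Injective s)
    (P : Fin n → Matrix (Fin n) (Fin n) ℂ)
    (hPh : ∀ i, (P i)ᴴ = P i)
    (hPo : ∀ i j, P i * P j = if i = j then P i else 0)
    (hPrk : ∀ i, (P i).trace = 1)
    (hPsum : ∑ i, P i = 1)
    (ρ : Matrix (Fin n) (Fin n) ℂ)
    (hρ : ρ = ∑ i, (Real.exp (-(s i)) : ℂ) • P i)
    (hρpos : ρ.PosDef) (hρtr : ρ.trace = 1)
    (hsteady : L ρ = 0)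
    (hDB : ∀ A B, (ρ * Aᴴ * Φ B).trace = (ρ * (Φ A)ᴴ * B).trace)
    (ρ₀ : Matrix (Fin n) (Fin n) ℂ) (hρ₀ : ρ₀.PosDef) (hρ₀tr : ρ₀.trace = 1)
    (E : ℝ → (Matrix (Fin n) (Fin n) ℂ →ₗ[ℂ] Matrix (Fin n) (Fin n) ℂ))
    (hE0 : E 0 = LinearMap.id)
    (hEder : ∀ X t, HasDerivAt (fun u => E u X) (L (E t X)) t)
    (hEsemi : ∀ t u, E (t + u) = (E u).comp (E t))
    (hETP : ∀ t X, (E t X).trace = X.trace)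
    (hEpos : ∀ t X, 0 ≤ t → X.PosSemidef → (E t X).PosSemidef)
    (hEcomm : ∀ t X, ∑ i, P i * E t X * P i = E t (∑ i, P i * X * P i)) :
    (∀ t u, 0 ≤ t → 0 ≤ u → ∀ i j : Fin n,
        ∑ k, (P k * E t (P i)).trace * (P j * E u (P k)).trace
          = (P j * E (t + u) (P i)).trace) ∧
    (∀ t, 0 ≤ t → ∀ i j : Fin n,
        ((P j * E t (P i)).trace).im = 0 ∧ 0 ≤ ((P j * E t (P i)).trace).re) ∧
    (∀ t, 0 ≤ t → ∀ i : Fin n, ∑ j, (P j * E t (P i)).trace = 1) := by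
  classical
  have hidem : ∀ i, P i * P i = P i := fun i => by simpa using hPo i i
  have pinch : ∀ i M, P i * M * P i = (P i * M).trace • P i :=
    fun i M => aux_pinch (P i) M (hPh i) (hidem i) (hPrk i)
  have hPSD : ∀ i, (P i).PosSemidef := by
    intro i
    have h : P i = (P i)ᴴ * (P i) := by rw [hPh, hidem]
    rw [h]
    exact Matrix.posSemidef_conjTranspose_mul_self _
  refine ⟨?_, ?_, ?_⟩
  · intro t u ht hu i j
    have hpP : ∑ k, P k * P i * P k = P i := by
      have h1 : ∀ k ∈ Finset.univ, P k * P i * P k = if k = i then P i else 0 := by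
        intro k _
        rw [hPo k i]
        split_ifs with h
        · subst h; rw [hidem]
        · rw [zero_mul]
      rw [Finset.sum_congr rfl h1]
      simp
    have hsum : E t (P i) = ∑ k, (P k * E t (P i)).trace • P k := by
      have h := hEcomm t (P i)
      rw [hpP] at h
      conv_lhs => rw [← h]
      exact Finset.sum_congr rfl fun k _ => pinch k _
    calc ∑ k, (P k * E t (P i)).trace * (P j * E u (P k)).trace
        = (P j * E u (E t (P i))).trace := by
          conv_rhs => rw [hsum]
          rw [map_sum, Finset.mul_sum, Matrix.trace_sum]
          refine Finset.sum_congr rfl fun k _ => ?_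
          rw [_root_.map_smul, mul_smul_comm, Matrix.trace_smul, smul_eq_mul]
      _ = (P j * E (t + u) (P i)).trace := by rw [hEsemi t u, LinearMap.comp_apply]
  · intro t ht i j
    have hX : (E t (P i)).PosSemidef := hEpos t _ ht (hPSD i)
    have hps : ((P j)ᴴ * E t (P i) * P j).PosSemidef := hX.conjTranspose_mul_mul_same (P j)
    have h1 : (P j * E t (P i)).trace = ((P j)ᴴ * E t (P i) * P j).trace := by
      rw [hPh, Matrix.trace_mul_cycle (P j) (E t (P i)) (P j), hidem]
    have h2 : (0 : ℂ) ≤ (P j * E t (P i)).trace := by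
      rw [h1]; exact aux_trace_nonneg _ hps
    obtain ⟨hre, him⟩ := Complex.le_def.mp h2
    exact ⟨by simpa using him.symm, by simpa using hre⟩
  · intro t ht i
    rw [← Matrix.trace_sum, ← Finset.sum_mul, hPsum, one_mul, hETP, hPrk]
end

section
/- Under the hypotheses of the preceding statement, the generator Q of the classical semigroup P(t) = e^{tQ} is given by Q_{ss'} = tr(P_s Φ(P_{s'})) − δ_{ss'} tr(P_s Φ(𝟙)), where Φ is the CP map associated to L; in particular Q_{ss'} ≥ 0 for s ≠ s' and Σ_{s'} Q_{ss'} = 0. -/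
open Matrix
open scoped ComplexOrder

attribute [local instance] Matrix.normedAddCommGroup Matrix.normedSpace

/-- under the hypotheses of Statement 13 (including the known
consequences `[H, P_i] = 0` and `[Φ(𝟙), P_i] = 0` of detailed balance), the generator
`Q` of the classical semigroup `P(t)_{ij} = tr(P_j e^{tL}(P_i))` (i.e. the derivative
of `P(t)` at `t = 0`) is `Q_{ij} = tr(P_i Φ(P_j)) − δ_{ij} tr(P_i Φ(𝟙))`; in
particular `Q_{ij} ≥ 0` for `i ≠ j` and each row of `Q` sums to `0`. -/
theorem stmt14 {n : ℕ} {ι : Type*} [Fintype ι]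
    (H : Matrix (Fin n) (Fin n) ℂ) (hHh : Hᴴ = H)
    (Γ : ι → Matrix (Fin n) (Fin n) ℂ)
    (Φ Φd : Matrix (Fin n) (Fin n) ℂ → Matrix (Fin n) (Fin n) ℂ)
    (hΦ : ∀ X, Φ X = ∑ l, (Γ l)ᴴ * X * Γ l)
    (hΦd : ∀ X, Φd X = ∑ l, Γ l * X * (Γ l)ᴴ)
    (L : Matrix (Fin n) (Fin n) ℂ →ₗ[ℂ] Matrix (Fin n) (Fin n) ℂ)
    (hL : ∀ σ, L σ = -(Complex.I • (H * σ - σ * H)) + Φd σ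
        - (1/2 : ℂ) • (Φ 1 * σ + σ * Φ 1))
    (s : Fin n → ℝ) (hs : Function.Injective s)
    (P : Fin n → Matrix (Fin n) (Fin n) ℂ)
    (hPh : ∀ i, (P i)ᴴ = P i)
    (hPo : ∀ i j, P i * P j = if i = j then P i else 0)
    (hPrk : ∀ i, (P i).trace = 1)
    (hPsum : ∑ i, P i = 1)
    (ρ : Matrix (Fin n) (Fin n) ℂ)
    (hρ : ρ = ∑ i, (Real.exp (-(s i)) : ℂ) • P i)
    (hρpos : ρ.PosDef) (hρtr : ρ.trace = 1)
    (hsteady : L ρ = 0)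
    (hDB : ∀ A B, (ρ * Aᴴ * Φ B).trace = (ρ * (Φ A)ᴴ * B).trace)
    (hHP : ∀ i, H * P i = P i * H)
    (hΦ1P : ∀ i, Φ 1 * P i = P i * Φ 1)
    (E : ℝ → (Matrix (Fin n) (Fin n) ℂ →ₗ[ℂ] Matrix (Fin n) (Fin n) ℂ))
    (hE0 : E 0 = LinearMap.id)
    (hEder : ∀ X t, HasDerivAt (fun u => E u X) (L (E t X)) t) :
    (∀ i j : Fin n, HasDerivAt (fun t => (P j * E t (P i)).trace)
        ((P i * Φ (P j)).trace - (if i = j then (P i * Φ 1).trace else 0)) 0) ∧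
    (∀ i j : Fin n, i ≠ j →
        ((P i * Φ (P j)).trace).im = 0 ∧ 0 ≤ ((P i * Φ (P j)).trace).re) ∧
    (∀ i : Fin n, ∑ j,
        ((P i * Φ (P j)).trace - (if i = j then (P i * Φ 1).trace else 0)) = 0) := by
  classical
  have keyL : ∀ i j : Fin n, (P j * L (P i)).trace
      = (P i * Φ (P j)).trace - (if i = j then (P i * Φ 1).trace else 0) := by
    intro i j
    rw [hL]
    have hcomm : H * P i - P i * H = 0 := by rw [hHP i, sub_self]
    rw [hcomm]
    have hΦdtr : (P j * Φd (P i)).trace = (P i * Φ (P j)).trace := by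
      rw [hΦd, hΦ, Finset.mul_sum, Finset.mul_sum, Matrix.trace_sum, Matrix.trace_sum]
      refine Finset.sum_congr rfl fun l _ => ?_
      calc (P j * (Γ l * P i * (Γ l)ᴴ)).trace
          = (P j * Γ l * P i * (Γ l)ᴴ).trace := by congr 1; noncomm_ring
        _ = ((Γ l)ᴴ * (P j * Γ l) * P i).trace := by
            rw [Matrix.trace_mul_cycle]
        _ = (P i * ((Γ l)ᴴ * P j * Γ l)).trace := by
            rw [Matrix.trace_mul_comm]; congr 1; noncomm_ring
    have hAC : (P j * (Φ 1 * P i + P i * Φ 1)).trace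
        = 2 * (if i = j then (P i * Φ 1).trace else 0) := by
      rw [hΦ1P i]
      have h1 : P j * (P i * Φ 1 + P i * Φ 1) = (P j * P i) * Φ 1 + (P j * P i) * Φ 1 := by
        noncomm_ring
      rw [h1, hPo j i]
      by_cases h : i = j
      · simp [h, two_mul]
      · have hji : ¬ j = i := fun hji => h hji.symm
        simp [h, hji]
    simp only [smul_zero, neg_zero, zero_add, Matrix.mul_sub, Matrix.mul_smul,
      Matrix.trace_sub, Matrix.trace_smul, hΦdtr, hAC, smul_eq_mul]
    ring
  refine ⟨?_, ?_, ?_⟩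
  · -- derivative
    intro i j
    set g : Matrix (Fin n) (Fin n) ℂ →L[ℂ] ℂ :=
      LinearMap.toContinuousLinearMap
        ((Matrix.traceLinearMap (Fin n) ℂ ℂ).comp (LinearMap.mulLeft ℂ (P j))) with hg
    have hgapp : ∀ X, g X = (P j * X).trace := fun X => rfl
    have hd := ((g.restrictScalars ℝ).hasFDerivAt
      (x := E 0 (P i))).comp_hasDerivAt 0 (hEder (P i) 0)
    have hE0' : E 0 (P i) = P i := by rw [hE0]; rfl
    rw [hE0'] at hd
    have hval : (g.restrictScalars ℝ) (L (P i))
        = (P i * Φ (P j)).trace - (if i = j then (P i * Φ 1).trace else 0) := by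
      show g (L (P i)) = _
      rw [hgapp, keyL]
    replace hd := hd.congr_deriv hval
    exact hd
  · -- positivity
    intro i j _
    have hpos : (0:ℂ) ≤ (P i * Φ (P j)).trace := by
      rw [hΦ, Finset.mul_sum, Matrix.trace_sum]
      refine Finset.sum_nonneg fun l _ => ?_
      have hM : ((P j * Γ l * P i)ᴴ * (P j * Γ l * P i)).trace
          = (P i * ((Γ l)ᴴ * P j * Γ l)).trace := by
        have e1 : (P j * Γ l * P i)ᴴ * (P j * Γ l * P i)
            = P i * (Γ l)ᴴ * (P j * P j) * (Γ l * P i) := by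
          simp only [Matrix.conjTranspose_mul, hPh]; noncomm_ring
        rw [e1, hPo j j, if_pos rfl]
        have e2 : P i * (Γ l)ᴴ * P j * (Γ l * P i)
            = (P i * (Γ l)ᴴ * P j * Γ l) * P i := by noncomm_ring
        rw [e2, Matrix.trace_mul_comm]
        have e3 : P i * (P i * (Γ l)ᴴ * P j * Γ l)
            = (P i * P i) * ((Γ l)ᴴ * P j * Γ l) := by noncomm_ring
        rw [e3, hPo i i, if_pos rfl]
      rw [← hM]
      set M := P j * Γ l * P i
      rw [Matrix.trace]
      refine Finset.sum_nonneg fun k _ => ?_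
      rw [Matrix.diag_apply, Matrix.mul_apply]
      refine Finset.sum_nonneg fun m _ => ?_
      simpa [Matrix.conjTranspose_apply] using star_mul_self_nonneg (M m k)
    rw [Complex.le_def] at hpos
    exact ⟨hpos.2.symm, by simpa using hpos.1⟩
  · -- row sums
    intro i
    rw [Finset.sum_sub_distrib]
    have hΦsum : ∑ j, Φ (P j) = Φ 1 := by
      simp only [hΦ]
      rw [Finset.sum_comm]
      refine Finset.sum_congr rfl fun l _ => ?_
      rw [← hPsum, Finset.mul_sum, Finset.sum_mul]
    have h1 : ∑ j, (P i * Φ (P j)).trace = (P i * Φ 1).trace := by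
      rw [← Matrix.trace_sum, ← Finset.mul_sum, hΦsum]
    rw [h1]
    simp
end

section
/- Classical detailed balance of the induced chain: with R the diagonal matrix R_{ss'} = δ_{ss'} e^{−s}, the transition rate matrix Q of Proposition (Q_{ss'} = tr(P_sΦ(P_{s'})) − δ_{ss'} tr(P_sΦ(𝟙))) satisfies RQ = QᵀR, i.e., e^{−s} Q_{ss'} = e^{−s'} Q_{s's} for all s, s'. Consequently RP(t)R⁻¹ = P(t)ᵀ for all t ≥ 0 and all eigenvalues of Q are real and ≤ 0 (nonpositive spectrum of an R-self-adjoint generator with Q𝟙 = 0). -/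
open Matrix
open scoped ComplexOrder

/-- classical detailed balance of the induced chain: with
`R = diag(e^{−s_i})` and the transition rate matrix
`Q_{ij} = tr(P_i Φ(P_j)) − δ_{ij} tr(P_i Φ(𝟙))` (real, with rows summing to `0`) of
the Markov chain induced by the two-time measurement protocol for a pair `(ρ, L)`
satisfying detailed balance (with `ρ = Σ_i e^{−s_i} P_i`, rank-one projections `P_i`,
`Φ` the `ρ`-self-adjoint CP map of `L`), one has `RQ = QᵀR`, i.e.
`e^{−s_i} Q_{ij} = e^{−s_j} Q_{ji}`; consequently `R P(t) R⁻¹ = P(t)ᵀ` for all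
`t ≥ 0`, where `P(t) = e^{tQ}`, and every eigenvalue of `Q` is real and `≤ 0`. -/
theorem stmt15 {n : ℕ} {ι : Type*} [Fintype ι]
    (H : Matrix (Fin n) (Fin n) ℂ) (hHh : Hᴴ = H)
    (Γ : ι → Matrix (Fin n) (Fin n) ℂ)
    (Φ : Matrix (Fin n) (Fin n) ℂ → Matrix (Fin n) (Fin n) ℂ)
    (hΦ : ∀ X, Φ X = ∑ l, (Γ l)ᴴ * X * Γ l)
    (s : Fin n → ℝ) (hs : Function.Injective s)
    (P : Fin n → Matrix (Fin n) (Fin n) ℂ)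
    (hPh : ∀ i, (P i)ᴴ = P i)
    (hPo : ∀ i j, P i * P j = if i = j then P i else 0)
    (hPrk : ∀ i, (P i).trace = 1)
    (hPsum : ∑ i, P i = 1)
    (ρ : Matrix (Fin n) (Fin n) ℂ)
    (hρ : ρ = ∑ i, (Real.exp (-(s i)) : ℂ) • P i)
    (hρpos : ρ.PosDef) (hρtr : ρ.trace = 1)
    (hDB : ∀ A B, (ρ * Aᴴ * Φ B).trace = (ρ * (Φ A)ᴴ * B).trace)
    (Q : Matrix (Fin n) (Fin n) ℝ)
    (hQ : ∀ i j, (Q i j : ℂ)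
        = (P i * Φ (P j)).trace - (if i = j then (P i * Φ 1).trace else 0))
    (hQrow : ∀ i, ∑ j, Q i j = 0)
    (R : Matrix (Fin n) (Fin n) ℝ)
    (hR : R = Matrix.diagonal (fun i => Real.exp (-(s i)))) :
    R * Q = Qᵀ * R ∧
    (∀ i j, Real.exp (-(s i)) * Q i j = Real.exp (-(s j)) * Q j i) ∧
    (∀ t : ℝ, 0 ≤ t →
        R * NormedSpace.exp (t • Q) * R⁻¹ = (NormedSpace.exp (t • Q))ᵀ) ∧
    (∀ μ ∈ spectrum ℂ (Q.map (Complex.ofReal)), μ.im = 0 ∧ μ.re ≤ 0) := by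
  classical
  set w : Fin n → ℝ := fun i => Real.exp (-(s i)) with hw
  -- ρ acts on the projections as the eigenvalue
  have hρP : ∀ i, ρ * P i = (w i : ℂ) • P i := by
    intro i
    rw [hρ, Finset.sum_mul]
    have key : ∀ j : Fin n, ((Real.exp (-(s j)) : ℂ) • P j) * P i
        = if i = j then (w i : ℂ) • P i else 0 := by
      intro j
      rw [smul_mul_assoc, hPo j i]
      by_cases h : i = j
      · subst h; rw [if_pos rfl, if_pos rfl]
      · rw [if_neg (fun hh => h hh.symm), if_neg h, smul_zero]
    rw [Finset.sum_congr rfl fun j _ => key j, Finset.sum_ite_eq, if_pos (Finset.mem_univ i)]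
  have hPρ : ∀ i, P i * ρ = (w i : ℂ) • P i := by
    intro i
    rw [hρ, Finset.mul_sum]
    have key : ∀ j : Fin n, P i * ((Real.exp (-(s j)) : ℂ) • P j)
        = if i = j then (w i : ℂ) • P i else 0 := by
      intro j
      rw [mul_smul_comm, hPo i j]
      by_cases h : i = j
      · subst h; rw [if_pos rfl, if_pos rfl]
      · rw [if_neg h, if_neg h, smul_zero]
    rw [Finset.sum_congr rfl fun j _ => key j, Finset.sum_ite_eq, if_pos (Finset.mem_univ i)]
  -- Φ preserves hermiticity
  have hΦherm : ∀ X : Matrix (Fin n) (Fin n) ℂ, Xᴴ = X → (Φ X)ᴴ = Φ X := by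
    intro X hX
    rw [hΦ, conjTranspose_sum]
    refine Finset.sum_congr rfl fun l _ => ?_
    simp [conjTranspose_mul, hX, mul_assoc]
  -- key symmetry from quantum detailed balance
  have hsym : ∀ i j, (w i : ℂ) * (P i * Φ (P j)).trace
      = (w j : ℂ) * (P j * Φ (P i)).trace := by
    intro i j
    have h := hDB (P j) (P i)
    rw [hPh j, hΦherm (P j) (hPh j)] at h
    -- LHS of h : (ρ * P j * Φ (P i)).trace
    have hL : (ρ * P j * Φ (P i)).trace = (w j : ℂ) * (P j * Φ (P i)).trace := by
      rw [hρP j, smul_mul_assoc, trace_smul, smul_eq_mul]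
    have hRt : (ρ * Φ (P j) * P i).trace = (w i : ℂ) * (P i * Φ (P j)).trace := by
      rw [trace_mul_comm, ← mul_assoc, hPρ i, smul_mul_assoc, trace_smul, smul_eq_mul]
    rw [hL, hRt] at h
    exact h.symm
  -- classical detailed balance for Q
  have hQsym : ∀ i j, w i * Q i j = w j * Q j i := by
    intro i j
    by_cases h : i = j
    · subst h; rfl
    · have : ((w i * Q i j : ℝ) : ℂ) = ((w j * Q j i : ℝ) : ℂ) := by
        push_cast
        rw [hQ i j, hQ j i, if_neg h, if_neg (fun hh => h hh.symm)]
        simpa using hsym i j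
      exact_mod_cast this
  -- part 1
  have hRQ : R * Q = Qᵀ * R := by
    ext i j
    rw [hR]
    simp only [diagonal_mul, mul_diagonal, transpose_apply]
    rw [hQsym i j, mul_comm]
  -- inverse of R
  set Rinv : Matrix (Fin n) (Fin n) ℝ := Matrix.diagonal (fun i => Real.exp (s i)) with hRinv
  have hRR1 : R * Rinv = 1 := by
    rw [hR, hRinv, diagonal_mul_diagonal]
    convert Matrix.diagonal_one
    rw [← Real.exp_add]; simp
  have hRR2 : Rinv * R = 1 := by
    rw [hR, hRinv, diagonal_mul_diagonal]
    convert Matrix.diagonal_one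
    rw [← Real.exp_add]; simp
  have hRinv_eq : R⁻¹ = Rinv := Matrix.inv_eq_right_inv hRR1
  -- part 3
  have part3 : ∀ t : ℝ, 0 ≤ t →
      R * NormedSpace.exp (t • Q) * R⁻¹ = (NormedSpace.exp (t • Q))ᵀ := by
    intro t _
    set U : (Matrix (Fin n) (Fin n) ℝ)ˣ := ⟨R, Rinv, hRR1, hRR2⟩ with hU
    have hconj : (U : Matrix (Fin n) (Fin n) ℝ) * (t • Q) * ((U⁻¹ : _ˣ) : Matrix (Fin n) (Fin n) ℝ)
        = (t • Q)ᵀ := by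
      show R * (t • Q) * Rinv = (t • Q)ᵀ
      rw [transpose_smul, Matrix.mul_smul, Matrix.smul_mul]
      congr 1
      rw [hRQ, mul_assoc, hRR1, mul_one]
    calc R * NormedSpace.exp (t • Q) * R⁻¹
        = (U : Matrix (Fin n) (Fin n) ℝ) * NormedSpace.exp (t • Q)
          * ((U⁻¹ : _ˣ) : Matrix (Fin n) (Fin n) ℝ) := by rw [hRinv_eq]; rfl
      _ = NormedSpace.exp ((U : Matrix (Fin n) (Fin n) ℝ) * (t • Q)
          * ((U⁻¹ : _ˣ) : Matrix (Fin n) (Fin n) ℝ)) := (Matrix.exp_units_conj U (t • Q)).symm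
      _ = NormedSpace.exp ((t • Q)ᵀ) := by rw [hconj]
      _ = (NormedSpace.exp (t • Q))ᵀ := Matrix.exp_transpose (t • Q)
  -- nonnegativity of off-diagonal entries
  have hQnn : ∀ i j, i ≠ j → 0 ≤ Q i j := by
    intro i j h
    have hc : (0 : ℂ) ≤ (Q i j : ℂ) := by
      rw [hQ i j, if_neg h, sub_zero, hΦ, Finset.mul_sum, trace_sum]
      refine Finset.sum_nonneg fun l _ => ?_
      have hH : (P j * Γ l * P i)ᴴ = P i * ((Γ l)ᴴ * P j) := by
        simp [conjTranspose_mul, hPh, mul_assoc]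
      have hE : (P j * Γ l * P i)ᴴ * (P j * Γ l * P i)
          = P i * ((Γ l)ᴴ * P j * Γ l) * P i := by
        rw [hH]
        have hPjj : P j * (P j * (Γ l * P i)) = P j * (Γ l * P i) := by
          rw [← mul_assoc, hPo j j, if_pos rfl]
        simp only [mul_assoc]
        rw [hPjj]
      have htr : (P i * ((Γ l)ᴴ * P j * Γ l)).trace
          = ((P j * Γ l * P i)ᴴ * (P j * Γ l * P i)).trace := by
        rw [hE, trace_mul_comm (P i * ((Γ l)ᴴ * P j * Γ l)) (P i)]
        conv_rhs => rw [← mul_assoc, hPo i i, if_pos rfl]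
      rw [htr]
      set B := P j * Γ l * P i with hB
      have hBtr : (Bᴴ * B).trace = ∑ k, ∑ m, star (B m k) * B m k := by
        rw [Matrix.trace]
        refine Finset.sum_congr rfl fun k _ => ?_
        rw [Matrix.diag_apply, Matrix.mul_apply]
        refine Finset.sum_congr rfl fun m _ => ?_
        rw [Matrix.conjTranspose_apply]
      rw [hBtr]
      exact Finset.sum_nonneg fun k _ =>
        Finset.sum_nonneg fun m _ => star_mul_self_nonneg (B m k)
    exact Complex.zero_le_real.mp hc
  refine ⟨hRQ, fun i j => hQsym i j, part3, ?_⟩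
  -- part 4: spectrum
  intro μ hμ
  set M : Matrix (Fin n) (Fin n) ℂ := Q.map (Complex.ofReal) with hM
  -- get an eigenvector
  obtain ⟨v, hv0, hvEq⟩ : ∃ v : Fin n → ℂ, v ≠ 0 ∧ M.mulVec v = μ • v := by
    rw [spectrum.mem_iff] at hμ
    rw [Algebra.algebraMap_eq_smul_one] at hμ
    have hdet : (μ • (1 : Matrix (Fin n) (Fin n) ℂ) - M).det = 0 := by
      by_contra hne
      exact hμ ((Matrix.isUnit_iff_isUnit_det _).mpr (isUnit_iff_ne_zero.mpr hne))
    obtain ⟨v, hv2, hv1⟩ := (Matrix.exists_mulVec_eq_zero_iff).mpr hdet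
    refine ⟨v, hv2, ?_⟩
    rw [Matrix.sub_mulVec, Matrix.smul_mulVec, Matrix.one_mulVec, sub_eq_zero] at hv1
    exact hv1.symm
  have eig : ∀ i, ∑ j, (Q i j : ℂ) * v j = μ * v i := by
    intro i
    have := congrFun hvEq i
    simpa [Matrix.mulVec, dotProduct, hM, Matrix.map_apply] using this
  -- the weighted norm
  set N : ℝ := ∑ i, w i * Complex.normSq (v i) with hN
  have hwpos : ∀ i, 0 < w i := fun i => Real.exp_pos _
  have hNpos : 0 < N := by
    obtain ⟨i0, hi0⟩ : ∃ i, v i ≠ 0 := by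
      by_contra hc
      push_neg at hc
      exact hv0 (funext fun i => hc i)
    refine Finset.sum_pos' (fun i _ => mul_nonneg (hwpos i).le (Complex.normSq_nonneg _)) ?_
    exact ⟨i0, Finset.mem_univ i0, mul_pos (hwpos i0) (Complex.normSq_pos.mpr hi0)⟩
  -- the weighted quadratic form
  set A : ℂ := ∑ i, ∑ j, (w i : ℂ) * (Q i j : ℂ) * ((starRingEnd ℂ) (v i) * v j) with hA
  have hA1 : A = μ * (N : ℂ) := by
    rw [hA]
    have : ∀ i, ∑ j, (w i : ℂ) * (Q i j : ℂ) * ((starRingEnd ℂ) (v i) * v j)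
        = (w i : ℂ) * (starRingEnd ℂ) (v i) * (μ * v i) := by
      intro i
      rw [← eig i, Finset.mul_sum]
      refine Finset.sum_congr rfl fun j _ => by ring
    rw [Finset.sum_congr rfl fun i _ => this i, hN]
    push_cast
    rw [Finset.mul_sum]
    refine Finset.sum_congr rfl fun i _ => ?_
    rw [Complex.normSq_eq_conj_mul_self]
    ring
  have hconjA : (starRingEnd ℂ) A = A := by
    rw [hA, _root_.map_sum]
    rw [Finset.sum_comm]
    refine Finset.sum_congr rfl fun j _ => ?_
    rw [_root_.map_sum]
    refine Finset.sum_congr rfl fun i _ => ?_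
    simp only [_root_.map_mul, Complex.conj_ofReal, Complex.conj_conj]
    have hdb : ((w i : ℝ) : ℂ) * ((Q i j : ℝ) : ℂ) = ((w j : ℝ) : ℂ) * ((Q j i : ℝ) : ℂ) := by
      push_cast [← Complex.ofReal_mul]
      exact_mod_cast congrArg (Complex.ofReal) (hQsym i j)
    rw [hdb]
    ring
  -- μ is real
  have hμre : ((μ.re : ℝ) : ℂ) = μ := by
    have h1 : (starRingEnd ℂ) μ * (N : ℂ) = μ * (N : ℂ) := by
      have := hconjA
      rw [hA1] at this
      simpa [_root_.map_mul, Complex.conj_ofReal] using this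
    have hNne : ((N : ℝ) : ℂ) ≠ 0 := by
      exact_mod_cast hNpos.ne'
    have : (starRingEnd ℂ) μ = μ := mul_right_cancel₀ hNne h1
    exact Complex.conj_eq_iff_re.mp this
  have him : μ.im = 0 := by
    have : (starRingEnd ℂ) μ = μ := by rw [← hμre]; simp [Complex.conj_ofReal]
    exact Complex.conj_eq_iff_im.mp this
  refine ⟨him, ?_⟩
  -- Dirichlet form identity
  have hQrowC : ∀ i, ∑ j, ((Q i j : ℝ) : ℂ) = 0 := by
    intro i
    have := congrArg (Complex.ofReal) (hQrow i)
    push_cast at this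
    simpa using this
  -- T1 = 0
  have hT1 : ∑ i, ∑ j, (w i : ℂ) * (Q i j : ℂ) * ((starRingEnd ℂ) (v i) * v i) = 0 := by
    refine Finset.sum_eq_zero fun i _ => ?_
    have : ∑ j, (w i : ℂ) * (Q i j : ℂ) * ((starRingEnd ℂ) (v i) * v i)
        = (w i : ℂ) * ((starRingEnd ℂ) (v i) * v i) * ∑ j, ((Q i j : ℝ) : ℂ) := by
      rw [Finset.mul_sum]
      refine Finset.sum_congr rfl fun j _ => by ring
    rw [this, hQrowC i, mul_zero]
  -- T2 = 0
  have hT2 : ∑ i, ∑ j, (w i : ℂ) * (Q i j : ℂ) * ((starRingEnd ℂ) (v j) * v j) = 0 := by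
    have hstep : ∀ i j, (w i : ℂ) * (Q i j : ℂ) * ((starRingEnd ℂ) (v j) * v j)
        = (w j : ℂ) * (Q j i : ℂ) * ((starRingEnd ℂ) (v j) * v j) := by
      intro i j
      have hdb : ((w i : ℝ) : ℂ) * ((Q i j : ℝ) : ℂ) = ((w j : ℝ) : ℂ) * ((Q j i : ℝ) : ℂ) := by
        exact_mod_cast congrArg (Complex.ofReal) (hQsym i j)
      rw [hdb]
    rw [Finset.sum_congr rfl fun i _ => Finset.sum_congr rfl fun j _ => hstep i j]
    rw [Finset.sum_comm]
    refine Finset.sum_eq_zero fun j _ => ?_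
    have : ∑ i, (w j : ℂ) * (Q j i : ℂ) * ((starRingEnd ℂ) (v j) * v j)
        = (w j : ℂ) * ((starRingEnd ℂ) (v j) * v j) * ∑ i, ((Q j i : ℝ) : ℂ) := by
      rw [Finset.mul_sum]
      refine Finset.sum_congr rfl fun i _ => by ring
    rw [this, hQrowC j, mul_zero]
  -- T4 = conj A = A
  have hT4 : ∑ i, ∑ j, (w i : ℂ) * (Q i j : ℂ) * ((starRingEnd ℂ) (v j) * v i) = A := by
    rw [← hconjA, hA, _root_.map_sum]
    refine Finset.sum_congr rfl fun i _ => ?_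
    rw [_root_.map_sum]
    refine Finset.sum_congr rfl fun j _ => ?_
    simp only [_root_.map_mul, Complex.conj_ofReal, Complex.conj_conj]
    ring
  -- the Dirichlet sum
  set Sr : ℝ := ∑ i, ∑ j, w i * Q i j * Complex.normSq (v i - v j) with hSr
  have hDirichlet : ((Sr : ℝ) : ℂ) = -(A + A) := by
    rw [hSr]
    push_cast
    have hexp : ∀ i j : Fin n, (w i : ℂ) * (Q i j : ℂ) * ((Complex.normSq (v i - v j) : ℝ) : ℂ)
        = (w i : ℂ) * (Q i j : ℂ) * ((starRingEnd ℂ) (v i) * v i)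
          + (w i : ℂ) * (Q i j : ℂ) * ((starRingEnd ℂ) (v j) * v j)
          - (w i : ℂ) * (Q i j : ℂ) * ((starRingEnd ℂ) (v i) * v j)
          - (w i : ℂ) * (Q i j : ℂ) * ((starRingEnd ℂ) (v j) * v i) := by
      intro i j
      rw [Complex.normSq_eq_conj_mul_self]
      simp only [map_sub]
      ring
    calc ∑ i, ∑ j, (w i : ℂ) * (Q i j : ℂ) * ((Complex.normSq (v i - v j) : ℝ) : ℂ)
        = (∑ i, ∑ j, (w i : ℂ) * (Q i j : ℂ) * ((starRingEnd ℂ) (v i) * v i))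
          + (∑ i, ∑ j, (w i : ℂ) * (Q i j : ℂ) * ((starRingEnd ℂ) (v j) * v j))
          - (∑ i, ∑ j, (w i : ℂ) * (Q i j : ℂ) * ((starRingEnd ℂ) (v i) * v j))
          - (∑ i, ∑ j, (w i : ℂ) * (Q i j : ℂ) * ((starRingEnd ℂ) (v j) * v i)) := by
          simp only [hexp, Finset.sum_sub_distrib, Finset.sum_add_distrib]
      _ = 0 + 0 - A - A := by rw [hT1, hT2, ← hA, hT4]
      _ = -(A + A) := by ring
  have hSrnn : 0 ≤ Sr := by
    rw [hSr]
    refine Finset.sum_nonneg fun i _ => Finset.sum_nonneg fun j _ => ?_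
    by_cases h : i = j
    · subst h; simp
    · exact mul_nonneg (mul_nonneg (hwpos i).le (hQnn i j h)) (Complex.normSq_nonneg _)
  -- conclude
  have hAeq : A = ((μ.re * N : ℝ) : ℂ) := by
    rw [hA1]
    push_cast
    rw [hμre]
  have hkeyC : ((Sr : ℝ) : ℂ) = ((-(2 * (μ.re * N)) : ℝ) : ℂ) := by
    rw [hDirichlet, hAeq]
    push_cast
    ring
  have hkeyR : Sr = -(2 * (μ.re * N)) := by exact_mod_cast hkeyC
  nlinarith [hNpos, hSrnn]
end

section
/- Quantum reset model spectral structure: on a d-dimensional Hilbert space let L(ρ) = −i[H,ρ] + Γ(T·tr(ρ) − ρ) with Γ > 0 and T a density matrix. Assume the nonzero Bohr spectrum of ad_H is simple. Then for every trace-class ρ₀: e^{tL}(ρ₀) = tr(ρ₀)·ρ⁺ + e^{−tΓ} e^{−itH}(ρ₀ − tr(ρ₀)ρ⁺)e^{itH}, where ρ⁺ = Γ(i·ad_H + Γ)⁻¹(T); in particular e^{tL}(ρ₀) → tr(ρ₀)ρ⁺ as t → ∞. -/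
open Matrix Filter
open scoped ComplexOrder

section linftyAux

attribute [local instance] Matrix.linftyOpNormedRing Matrix.linftyOpNormedAlgebra

lemma expDerivEntry {d : ℕ} (H : Matrix (Fin d) (Fin d) ℂ) (z : ℂ) (t : ℝ) (i j : Fin d) :
    HasDerivAt (fun u : ℝ => NormedSpace.exp ((z * u) • H) i j)
      ((z • (NormedSpace.exp ((z * t) • H) * H)) i j) t := by
  have h1 : HasDerivAt (fun w : ℂ => NormedSpace.exp (w • H))
      (NormedSpace.exp ((z * t) • H) * H) (z * t) := hasDerivAt_exp_smul_const H (z * t)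
  have h2 : HasDerivAt (fun u : ℝ => z * (u : ℂ)) z t := by
    simpa using (Complex.ofRealCLM.hasDerivAt (x := t)).const_mul z
  have h3 : HasDerivAt (fun u : ℝ => NormedSpace.exp ((z * u) • H))
      (z • (NormedSpace.exp ((z * t) • H) * H)) t := by
    have := HasDerivAt.scomp t h1 h2
    exact this
  let eL : (Matrix (Fin d) (Fin d) ℂ) →ₗ[ℂ] ℂ :=
    { toFun := fun A => A i j, map_add' := fun _ _ => rfl, map_smul' := fun _ _ => rfl }
  exact (((LinearMap.toContinuousLinearMap eL).restrictScalars ℝ).hasFDerivAt.comp_hasDerivAt t h3 :)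

lemma commuteExp {d : ℕ} (H : Matrix (Fin d) (Fin d) ℂ) (z : ℂ) :
    H * NormedSpace.exp (z • H) = NormedSpace.exp (z • H) * H :=
  (((Commute.refl H).smul_right z).exp_right).eq

end linftyAux

attribute [local instance] Matrix.normedAddCommGroup Matrix.normedSpace

lemma hasDerivAt_matrix {d : ℕ} {f : ℝ → Matrix (Fin d) (Fin d) ℂ}
    {f' : Matrix (Fin d) (Fin d) ℂ} {t : ℝ} :
    HasDerivAt f f' t ↔ ∀ i j, HasDerivAt (fun u => f u i j) (f' i j) t := by
  exact (hasDerivAt_pi (φ := f)).trans (forall_congr' fun i => hasDerivAt_pi)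

lemma matMulDeriv {d : ℕ} {f g : ℝ → Matrix (Fin d) (Fin d) ℂ}
    {f' g' : Matrix (Fin d) (Fin d) ℂ} {t : ℝ}
    (hf : HasDerivAt f f' t) (hg : HasDerivAt g g' t) :
    HasDerivAt (fun u => f u * g u) (f' * g t + f t * g') t := by
  rw [hasDerivAt_matrix] at hf hg ⊢
  intro i j
  have h : HasDerivAt (fun u => ∑ k, f u i k * g u k j)
      (∑ k, (f' i k * g t k j + f t i k * g' k j)) t :=
    HasDerivAt.fun_sum fun k _ => (hf i k).mul (hg k j)
  simpa [Matrix.mul_apply, Finset.sum_add_distrib] using h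

/-- quantum reset model spectral structure: on a `d`-dimensional
Hilbert space let `L(ρ) = −i[H,ρ] + Γ(T·tr(ρ) − ρ)` with `Γ > 0`, `T` a density
matrix and `H` self-adjoint whose nonzero Bohr spectrum (spectrum of `ad_H`) is
simple. Then for every `ρ₀`:
`e^{tL}(ρ₀) = tr(ρ₀)·ρ⁺ + e^{−tΓ} e^{−itH}(ρ₀ − tr(ρ₀)ρ⁺)e^{itH}`, where
`ρ⁺ = Γ(i·ad_H + Γ)⁻¹(T)` (i.e. `(i·ad_H + Γ)(ρ⁺) = ΓT`); in particular
`e^{tL}(ρ₀) → tr(ρ₀)ρ⁺` as `t → ∞`. -/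
theorem stmt17 {d : ℕ}
    (H : Matrix (Fin d) (Fin d) ℂ) (hHh : Hᴴ = H)
    (hBohr : ∀ μ : ℂ, μ ≠ 0 →
      Module.finrank ℂ
        (Module.End.eigenspace
          (LinearMap.mulLeft ℂ H - LinearMap.mulRight ℂ H) μ) ≤ 1)
    (Γc : ℝ) (hΓ : 0 < Γc)
    (T : Matrix (Fin d) (Fin d) ℂ) (hT : T.PosSemidef) (hTtr : T.trace = 1)
    (L : Matrix (Fin d) (Fin d) ℂ →ₗ[ℂ] Matrix (Fin d) (Fin d) ℂ)
    (hL : ∀ σ, L σ = -(Complex.I • (H * σ - σ * H)) + (Γc : ℂ) • (σ.trace • T - σ))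
    (ρplus : Matrix (Fin d) (Fin d) ℂ)
    (hρplus : Complex.I • (H * ρplus - ρplus * H) + (Γc : ℂ) • ρplus = (Γc : ℂ) • T)
    (E : ℝ → (Matrix (Fin d) (Fin d) ℂ →ₗ[ℂ] Matrix (Fin d) (Fin d) ℂ))
    (hE0 : E 0 = LinearMap.id)
    (hEder : ∀ X t, HasDerivAt (fun u => E u X) (L (E t X)) t) :
    ∀ ρ₀ : Matrix (Fin d) (Fin d) ℂ,
      (∀ t : ℝ, E t ρ₀ = ρ₀.trace • ρplus
          + Complex.exp (-(t * Γc)) •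
            (NormedSpace.exp (-(Complex.I * t) • H) * (ρ₀ - ρ₀.trace • ρplus) *
              NormedSpace.exp ((Complex.I * t) • H))) ∧
      Tendsto (fun t => E t ρ₀) atTop (nhds (ρ₀.trace • ρplus)) := by
  intro ρ₀
  -- the propagator preserves the trace
  have hLtr : ∀ σ : Matrix (Fin d) (Fin d) ℂ, (L σ).trace = 0 := by
    intro σ
    rw [hL]
    simp [Matrix.trace_add, Matrix.trace_smul, Matrix.trace_sub, Matrix.trace_neg,
      Matrix.trace_mul_comm H σ, hTtr, smul_eq_mul]
  have htr : ∀ u : ℝ, (E u ρ₀).trace = ρ₀.trace := by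
    have hder : ∀ t : ℝ, HasDerivAt (fun u => (E u ρ₀).trace) 0 t := by
      intro t
      have h := hEder ρ₀ t
      rw [hasDerivAt_matrix] at h
      have h2 : HasDerivAt (fun u => ∑ i, E u ρ₀ i i) (∑ i, L (E t ρ₀) i i) t :=
        HasDerivAt.fun_sum fun i _ => h i i
      have h3 : (∑ i, L (E t ρ₀) i i) = 0 := by
        simpa [Matrix.trace, Matrix.diag] using hLtr (E t ρ₀)
      rw [h3] at h2
      simpa [Matrix.trace, Matrix.diag] using h2
    intro u
    have h := is_const_of_deriv_eq_zero (𝕜 := ℝ) (f := fun u => (E u ρ₀).trace)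
      (fun x => (hder x).differentiableAt) (fun x => (hder x).deriv) u 0
    simpa [hE0] using h
  -- derivative of X u := E u ρ₀ - c • ρplus
  have hXder : ∀ t : ℝ, HasDerivAt (fun u => E u ρ₀ - ρ₀.trace • ρplus)
      (-(Complex.I • (H * (E t ρ₀ - ρ₀.trace • ρplus) - (E t ρ₀ - ρ₀.trace • ρplus) * H))
        - (Γc : ℂ) • (E t ρ₀ - ρ₀.trace • ρplus)) t := by
    intro t
    have h := (hEder ρ₀ t).sub_const (ρ₀.trace • ρplus)
    refine h.congr_deriv ?_
    have key : (Γc : ℂ) • (ρ₀.trace • T - E t ρ₀)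
        = ρ₀.trace • (Complex.I • (H * ρplus - ρplus * H) + (Γc : ℂ) • ρplus)
          - (Γc : ℂ) • E t ρ₀ := by
      rw [hρplus, smul_sub, smul_comm]
    rw [hL, htr, key]
    simp only [mul_sub, sub_mul, Matrix.mul_smul, Matrix.smul_mul]
    module
  set eR : ℝ → Matrix (Fin d) (Fin d) ℂ :=
    fun u => NormedSpace.exp ((Complex.I * u) • H) with heRdef
  set eL : ℝ → Matrix (Fin d) (Fin d) ℂ :=
    fun u => NormedSpace.exp ((-Complex.I * u) • H) with heLdef
  set X : ℝ → Matrix (Fin d) (Fin d) ℂ :=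
    fun u => E u ρ₀ - ρ₀.trace • ρplus with hXdef
  have hRd : ∀ t : ℝ, HasDerivAt eR (Complex.I • (eR t * H)) t := fun t =>
    hasDerivAt_matrix.mpr fun i j => expDerivEntry H Complex.I t i j
  have hLd : ∀ t : ℝ, HasDerivAt eL ((-Complex.I) • (eL t * H)) t := fun t =>
    hasDerivAt_matrix.mpr fun i j => expDerivEntry H (-Complex.I) t i j
  have hcommL : ∀ u : ℝ, eL u * H = H * eL u := fun u => (commuteExp H _).symm
  have hRL : ∀ u : ℝ, eR u * eL u = 1 := by
    intro u
    have hcm : Commute ((Complex.I * u) • H) ((-Complex.I * u) • H) :=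
      ((Commute.refl H).smul_left _).smul_right _
    rw [heRdef, heLdef]
    rw [← Matrix.exp_add_of_commute _ _ hcm, ← add_smul]
    norm_num [NormedSpace.exp_zero]
  have hLR : ∀ u : ℝ, eL u * eR u = 1 := by
    intro u
    have hcm : Commute ((-Complex.I * u) • H) ((Complex.I * u) • H) :=
      ((Commute.refl H).smul_left _).smul_right _
    rw [heRdef, heLdef]
    rw [← Matrix.exp_add_of_commute _ _ hcm, ← add_smul]
    norm_num [NormedSpace.exp_zero]
  have hsc : ∀ t : ℝ, HasDerivAt (fun u : ℝ => Complex.exp (↑u * ↑Γc))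
      ((Γc : ℂ) * Complex.exp (↑t * ↑Γc)) t := by
    intro t
    have h0 : HasDerivAt (fun u : ℝ => ((u : ℂ) * (Γc : ℂ))) ((Γc : ℂ)) t := by
      simpa using (Complex.ofRealCLM.hasDerivAt (x := t)).mul_const (Γc : ℂ)
    simpa [mul_comm] using h0.cexp
  have hYd : ∀ t : ℝ, HasDerivAt
      (fun u : ℝ => Complex.exp (↑u * ↑Γc) • (eR u * X u * eL u)) 0 t := by
    intro t
    have h1 := matMulDeriv (hRd t) (hXder t)
    have h2 := matMulDeriv h1 (hLd t)
    have h3 := (hsc t).smul h2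
    refine h3.congr_deriv ?_
    rw [hcommL t]
    simp only [hXdef, Matrix.smul_mul, Matrix.mul_smul, sub_mul, mul_sub, add_mul, mul_add,
      smul_sub, smul_add, smul_smul, smul_neg, neg_smul, neg_mul, mul_neg, mul_assoc, neg_sub]
    module
  have hYconst : ∀ u : ℝ, Complex.exp (↑u * ↑Γc) • (eR u * X u * eL u)
      = ρ₀ - ρ₀.trace • ρplus := by
    intro u
    have h := is_const_of_deriv_eq_zero (𝕜 := ℝ)
      (f := fun u : ℝ => Complex.exp (↑u * ↑Γc) • (eR u * X u * eL u))
      (fun x => (hYd x).differentiableAt) (fun x => (hYd x).deriv) u 0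
    rw [h, heRdef, heLdef, hXdef]
    simp [hE0, NormedSpace.exp_zero]
  have hform : ∀ t : ℝ, E t ρ₀ = ρ₀.trace • ρplus
      + Complex.exp (-(↑t * ↑Γc)) • (eL t * (ρ₀ - ρ₀.trace • ρplus) * eR t) := by
    intro t
    have h1 := hYconst t
    have h2 : Complex.exp (-(↑t * ↑Γc)) • (eL t * (ρ₀ - ρ₀.trace • ρplus) * eR t) = X t := by
      rw [← h1, Matrix.mul_smul, Matrix.smul_mul, smul_smul, ← Complex.exp_add,
        show -((t:ℂ) * ↑Γc) + ↑t * ↑Γc = (0 : ℂ) by ring, Complex.exp_zero, one_smul]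
      calc eL t * (eR t * X t * eL t) * eR t
          = (eL t * eR t) * X t * (eL t * eR t) := by noncomm_ring
        _ = X t := by rw [hLR t, one_mul, mul_one]
    rw [h2, hXdef]
    module
  -- unitarity of the exponentials
  have hstar : ∀ u : ℝ, star (eR u) = eL u := by
    intro u
    rw [heRdef, heLdef]
    show (NormedSpace.exp ((Complex.I * (u : ℂ)) • H))ᴴ = _
    rw [← Matrix.exp_conjTranspose]
    congr 1
    rw [Matrix.conjTranspose_smul, hHh]
    congr 1
    simp [Complex.star_def, _root_.map_mul, Complex.conj_I, Complex.conj_ofReal]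
  have hstar' : ∀ u : ℝ, star (eL u) = eR u := by
    intro u
    rw [heRdef, heLdef]
    show (NormedSpace.exp ((-Complex.I * (u : ℂ)) • H))ᴴ = _
    rw [← Matrix.exp_conjTranspose]
    congr 1
    rw [Matrix.conjTranspose_smul, hHh]
    congr 1
    simp [Complex.star_def, _root_.map_mul, Complex.conj_I, Complex.conj_ofReal]
  have hUR : ∀ u : ℝ, eR u ∈ Matrix.unitaryGroup (Fin d) ℂ := by
    intro u
    rw [Matrix.mem_unitaryGroup_iff, hstar u]
    exact hRL u
  have hUL : ∀ u : ℝ, eL u ∈ Matrix.unitaryGroup (Fin d) ℂ := by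
    intro u
    rw [Matrix.mem_unitaryGroup_iff, hstar' u]
    exact hLR u
  -- uniform bound
  set C : Matrix (Fin d) (Fin d) ℂ := ρ₀ - ρ₀.trace • ρplus with hCdef
  set K : ℝ := ∑ l : Fin d, ∑ k : Fin d, ‖C k l‖ with hKdef
  have hKnn : 0 ≤ K := Finset.sum_nonneg fun l _ =>
    Finset.sum_nonneg fun k _ => norm_nonneg _
  have hent : ∀ (u : ℝ) (i j : Fin d), ‖(eL u * C * eR u) i j‖ ≤ K := by
    intro u i j
    calc ‖(eL u * C * eR u) i j‖ = ‖∑ l, (eL u * C) i l * eR u l j‖ := by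
          rw [Matrix.mul_apply]
      _ ≤ ∑ l, ‖(eL u * C) i l * eR u l j‖ := norm_sum_le _ _
      _ ≤ ∑ l, ∑ k, ‖C k l‖ := by
          refine Finset.sum_le_sum fun l _ => ?_
          rw [norm_mul]
          calc ‖(eL u * C) i l‖ * ‖eR u l j‖ ≤ ‖(eL u * C) i l‖ * 1 :=
                mul_le_mul_of_nonneg_left
                  (entry_norm_bound_of_unitary (hUR u) _ _) (norm_nonneg _)
            _ = ‖(eL u * C) i l‖ := mul_one _
            _ ≤ ∑ k, ‖eL u i k * C k l‖ := by
                rw [Matrix.mul_apply]; exact norm_sum_le _ _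
            _ ≤ ∑ k, ‖C k l‖ := by
                refine Finset.sum_le_sum fun k _ => ?_
                rw [norm_mul]
                calc ‖eL u i k‖ * ‖C k l‖ ≤ 1 * ‖C k l‖ :=
                      mul_le_mul_of_nonneg_right
                        (entry_norm_bound_of_unitary (hUL u) _ _) (norm_nonneg _)
                  _ = ‖C k l‖ := one_mul _
      _ = K := hKdef.symm
  have hnorm : ∀ u : ℝ, ‖eL u * C * eR u‖ ≤ K := fun u =>
    (Matrix.norm_le_iff hKnn).mpr (hent u)
  refine ⟨fun t => ?_, ?_⟩
  · have h := hform t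
    rw [heRdef, heLdef] at h
    simpa only [neg_mul] using h
  · have hb : ∀ u : ℝ, ‖E u ρ₀ - ρ₀.trace • ρplus‖ ≤ Real.exp (-(u * Γc)) * K := by
      intro u
      have h : E u ρ₀ - ρ₀.trace • ρplus
          = Complex.exp (-(↑u * ↑Γc)) • (eL u * C * eR u) := by
        rw [hform u, hCdef]; abel
      rw [h, norm_smul]
      have habs : ‖Complex.exp (-((u : ℂ) * (Γc : ℂ)))‖ = Real.exp (-(u * Γc)) := by
        rw [show -((u : ℂ) * (Γc : ℂ)) = ((-(u * Γc) : ℝ) : ℂ) by push_cast; ring,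
          Complex.norm_exp_ofReal]
      rw [habs]
      exact mul_le_mul_of_nonneg_left (hnorm u) (Real.exp_pos _).le
    have hK0 : Tendsto (fun u : ℝ => Real.exp (-(u * Γc)) * K) atTop (nhds 0) := by
      have h1 : Tendsto (fun u : ℝ => -(u * Γc)) atTop atBot :=
        tendsto_neg_atTop_atBot.comp (tendsto_id.atTop_mul_const hΓ)
      simpa using (Real.tendsto_exp_atBot.comp h1).mul_const K
    have h0 : Tendsto (fun u : ℝ => E u ρ₀ - ρ₀.trace • ρplus) atTop (nhds 0) :=
      squeeze_zero_norm hb hK0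
    have h2 := h0.add_const (ρ₀.trace • ρplus)
    simpa using h2
end

section
/- For the quantum reset model L(ρ) = −i[H,ρ] + Γ(T tr(ρ) − ρ) with T > 0 and [H,T] = 0 (so the steady state is ρ⁺ = T and detailed balance holds), the entropy production in any faithful state ρ satisfies EP(ρ) := tr(L(ρ)(log T − log ρ)) = Γ(Ent(T|ρ) + Ent(ρ|T)), where Ent(μ|ν) = tr(μ(log μ − log ν)). In particular EP(ρ) ≥ 0 with equality iff ρ = T. -/
open Matrix
open scoped ComplexOrder

lemma herm_decomp {d : ℕ} {X : Matrix (Fin d) (Fin d) ℂ} (hX : X.IsHermitian) :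
    ∃ (U : Matrix (Fin d) (Fin d) ℂ) (a : Fin d → ℝ),
      Uᴴ * U = 1 ∧ U * Uᴴ = 1 ∧ X = U * diagonal (fun i => (a i : ℂ)) * Uᴴ ∧
      NormedSpace.exp X = U * diagonal (fun i => Complex.exp (a i)) * Uᴴ := by
  set U : Matrix (Fin d) (Fin d) ℂ := (hX.eigenvectorUnitary : Matrix (Fin d) (Fin d) ℂ)
  have h1 : Uᴴ * U = 1 := by
    simpa [Matrix.star_eq_conjTranspose] using hX.eigenvectorUnitary.2.1
  have h2 : U * Uᴴ = 1 := by
    simpa [Matrix.star_eq_conjTranspose] using hX.eigenvectorUnitary.2.2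
  have h3 : X = U * diagonal (fun i => ((hX.eigenvalues i : ℝ) : ℂ)) * Uᴴ := by
    have h := hX.spectral_theorem
    simp [Matrix.star_eq_conjTranspose] at h
    exact h
  refine ⟨U, hX.eigenvalues, h1, h2, h3, ?_⟩
  have hUnit : IsUnit U := by
    rw [Matrix.isUnit_iff_isUnit_det]
    exact IsUnit.of_mul_eq_one Uᴴ.det (by rw [← Matrix.det_mul, h2, Matrix.det_one])
  have hUinv : U⁻¹ = Uᴴ := Matrix.inv_eq_right_inv h2
  have := Matrix.exp_conj U (diagonal fun i => ((hX.eigenvalues i : ℝ) : ℂ)) hUnit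
  rw [hUinv] at this
  rw [congrArg (NormedSpace.exp) h3, this, Matrix.exp_diagonal]
  have hfun : (NormedSpace.exp fun i => ((hX.eigenvalues i : ℝ) : ℂ))
      = fun i => Complex.exp (hX.eigenvalues i) := by
    funext i
    rw [Pi.coe_exp, ← Complex.exp_eq_exp_ℂ]
  rw [hfun]

lemma trace_conj_pair {d : ℕ} (U V : Matrix (Fin d) (Fin d) ℂ) (f g : Fin d → ℂ) :
    ((U * diagonal f * Uᴴ) * (V * diagonal g * Vᴴ)).trace
      = ∑ i, ∑ j, f i * g j * ((Complex.normSq ((Uᴴ * V) i j) : ℂ)) := by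
  have e1 : (U * diagonal f * Uᴴ) * (V * diagonal g * Vᴴ)
      = U * (diagonal f * (Uᴴ * (V * (diagonal g * Vᴴ)))) := by
    simp only [Matrix.mul_assoc]
  rw [e1, Matrix.trace_mul_comm]
  have e2 : diagonal f * (Uᴴ * (V * (diagonal g * Vᴴ))) * U
      = (diagonal f * (Uᴴ * V)) * (diagonal g * (Uᴴ * V)ᴴ) := by
    rw [conjTranspose_mul, conjTranspose_conjTranspose]
    simp only [Matrix.mul_assoc]
  rw [e2]
  set W := Uᴴ * V with hW
  rw [Matrix.trace]
  refine Finset.sum_congr rfl fun i _ => ?_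
  rw [Matrix.diag_apply, Matrix.mul_apply]
  refine Finset.sum_congr rfl fun j _ => ?_
  rw [Matrix.diagonal_mul, Matrix.diagonal_mul, Matrix.conjTranspose_apply,
    Complex.star_def, ← Complex.mul_conj]
  ring

lemma trace_conj_same {d : ℕ} (U : Matrix (Fin d) (Fin d) ℂ) (f g : Fin d → ℂ)
    (hU : Uᴴ * U = 1) :
    ((U * diagonal f * Uᴴ) * (U * diagonal g * Uᴴ)).trace = ∑ i, f i * g i := by
  have e1 : (U * diagonal f * Uᴴ) * (U * diagonal g * Uᴴ)
      = U * (diagonal f * diagonal g) * Uᴴ := by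
    rw [Matrix.mul_assoc (U * diagonal f) Uᴴ (U * diagonal g * Uᴴ)]
    rw [show Uᴴ * (U * diagonal g * Uᴴ) = diagonal g * Uᴴ by
      rw [← Matrix.mul_assoc, ← Matrix.mul_assoc, hU, one_mul]]
    simp only [Matrix.mul_assoc]
  rw [e1, Matrix.trace_mul_cycle, ← Matrix.mul_assoc, hU, one_mul,
    Matrix.diagonal_mul_diagonal, Matrix.trace_diagonal]

lemma term_nonneg (a b : ℝ) : 0 ≤ (Real.exp a - Real.exp b) * (a - b) := by
  rcases le_total a b with h | h
  · have := Real.exp_le_exp.mpr h; nlinarith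
  · have := Real.exp_le_exp.mpr h; nlinarith

lemma term_eq_zero {a b : ℝ} (h : (Real.exp a - Real.exp b) * (a - b) = 0) : a = b := by
  by_contra hne
  rcases lt_or_gt_of_ne hne with hlt | hlt
  · have := Real.exp_lt_exp.mpr hlt; nlinarith
  · have := Real.exp_lt_exp.mpr hlt; nlinarith
lemma key_pos {d : ℕ} (X Y : Matrix (Fin d) (Fin d) ℂ) (hX : X.IsHermitian) (hY : Y.IsHermitian) :
    ∃ S : ℝ, ((NormedSpace.exp X - NormedSpace.exp Y) * (X - Y)).trace = (S : ℂ)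
      ∧ 0 ≤ S ∧ (S = 0 → X = Y) := by
  obtain ⟨U, a, hU1, hU2, hXd, hXe⟩ := herm_decomp hX
  obtain ⟨V, b, hV1, hV2, hYd, hYe⟩ := herm_decomp hY
  set W := Uᴴ * V with hW
  have hWW : W * Wᴴ = 1 := by
    rw [hW, conjTranspose_mul, conjTranspose_conjTranspose, Matrix.mul_assoc,
      ← Matrix.mul_assoc V, hV2, one_mul, hU1]
  have hWW' : Wᴴ * W = 1 := by
    rw [hW, conjTranspose_mul, conjTranspose_conjTranspose, Matrix.mul_assoc,
      ← Matrix.mul_assoc U, hU2, one_mul, hV1]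
  have hrowC : ∀ i, ∑ j, (Complex.normSq (W i j) : ℂ) = 1 := by
    intro i
    have h := congrFun (congrFun hWW i) i
    rw [Matrix.mul_apply] at h
    simpa [Matrix.conjTranspose_apply, Complex.star_def, Complex.mul_conj,
      Matrix.one_apply] using h
  have hcolC : ∀ j, ∑ i, (Complex.normSq (W i j) : ℂ) = 1 := by
    intro j
    have h := congrFun (congrFun hWW' j) j
    rw [Matrix.mul_apply] at h
    simp only [Matrix.conjTranspose_apply, Complex.star_def] at h
    rw [show (1 : Matrix (Fin d) (Fin d) ℂ) j j = 1 from Matrix.one_apply_eq j] at h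
    rw [← h]
    refine Finset.sum_congr rfl fun i _ => ?_
    rw [← Complex.mul_conj]
    ring
  set S : ℝ := ∑ i, ∑ j, Complex.normSq (W i j) * ((Real.exp (a i) - Real.exp (b j)) * (a i - b j)) with hS
  have hterm_nonneg : ∀ i j, 0 ≤ Complex.normSq (W i j) * ((Real.exp (a i) - Real.exp (b j)) * (a i - b j)) :=
    fun i j => mul_nonneg (Complex.normSq_nonneg _) (term_nonneg _ _)
  refine ⟨S, ?_, ?_, ?_⟩
  · -- trace identity
    have t1 : (NormedSpace.exp X * X).trace = ∑ i, Complex.exp (a i) * ((a i : ℝ) : ℂ) := by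
      rw [hXe, hXd, trace_conj_same U _ _ hU1]
    have t4 : (NormedSpace.exp Y * Y).trace = ∑ j, Complex.exp (b j) * ((b j : ℝ) : ℂ) := by
      rw [hYe, hYd, trace_conj_same V _ _ hV1]
    have t2 : (NormedSpace.exp X * Y).trace
        = ∑ i, ∑ j, Complex.exp (a i) * ((b j : ℝ) : ℂ) * (Complex.normSq (W i j) : ℂ) := by
      rw [hXe, hYd, trace_conj_pair]
    have t3 : (NormedSpace.exp Y * X).trace
        = ∑ i, ∑ j, ((a i : ℝ) : ℂ) * Complex.exp (b j) * (Complex.normSq (W i j) : ℂ) := by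
      rw [Matrix.trace_mul_comm, hXd, hYe, trace_conj_pair]
    have hcast : (S : ℂ) = ∑ i, ∑ j, (Complex.normSq (W i j) : ℂ)
        * ((Complex.exp (a i) - Complex.exp (b j)) * (((a i : ℝ) : ℂ) - ((b j : ℝ) : ℂ))) := by
      rw [hS]
      push_cast
      rfl
    have h1 : ∑ i, Complex.exp (a i) * ((a i : ℝ) : ℂ)
        = ∑ i, ∑ j, Complex.exp (a i) * ((a i : ℝ) : ℂ) * (Complex.normSq (W i j) : ℂ) := by
      refine Finset.sum_congr rfl fun i _ => ?_
      rw [← Finset.mul_sum, hrowC i, mul_one]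
    have h4 : ∑ j, Complex.exp (b j) * ((b j : ℝ) : ℂ)
        = ∑ i, ∑ j, Complex.exp (b j) * ((b j : ℝ) : ℂ) * (Complex.normSq (W i j) : ℂ) := by
      rw [Finset.sum_comm]
      refine Finset.sum_congr rfl fun j _ => ?_
      rw [← Finset.mul_sum, hcolC j, mul_one]
    rw [sub_mul, mul_sub, mul_sub, Matrix.trace_sub, Matrix.trace_sub, Matrix.trace_sub, t1, t2, t3, t4, hcast,
      h1, h4]
    rw [← Finset.sum_sub_distrib, ← Finset.sum_sub_distrib, ← Finset.sum_sub_distrib]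
    refine Finset.sum_congr rfl fun i _ => ?_
    rw [← Finset.sum_sub_distrib, ← Finset.sum_sub_distrib, ← Finset.sum_sub_distrib]
    exact Finset.sum_congr rfl fun j _ => by ring
  · exact Finset.sum_nonneg fun i _ => Finset.sum_nonneg fun j _ => hterm_nonneg i j
  · intro hS0
    have hterm0 : ∀ i j, Complex.normSq (W i j)
        * ((Real.exp (a i) - Real.exp (b j)) * (a i - b j)) = 0 := by
      intro i j
      have h' := (Finset.sum_eq_zero_iff_of_nonneg
        (fun i _ => Finset.sum_nonneg fun j _ => hterm_nonneg i j)).mp hS0 i (Finset.mem_univ i)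
      exact (Finset.sum_eq_zero_iff_of_nonneg (fun j _ => hterm_nonneg i j)).mp h' j (Finset.mem_univ j)
    have hkey : ∀ i j, W i j = 0 ∨ a i = b j := by
      intro i j
      rcases mul_eq_zero.mp (hterm0 i j) with h | h
      · exact Or.inl (Complex.normSq_eq_zero.mp h)
      · exact Or.inr (term_eq_zero h)
    have hD : diagonal (fun i => ((a i : ℝ) : ℂ)) * W = W * diagonal (fun j => ((b j : ℝ) : ℂ)) := by
      ext i j
      rw [Matrix.diagonal_mul, Matrix.mul_diagonal]
      rcases hkey i j with h | h
      · rw [h]; ring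
      · rw [h]; ring
    have e : U * ((diagonal fun i => ((a i : ℝ) : ℂ)) * W) * Vᴴ = X := by
      rw [hW, hXd]
      simp only [← Matrix.mul_assoc]
      rw [Matrix.mul_assoc (U * (diagonal fun i => ((a i : ℝ) : ℂ)) * Uᴴ) V Vᴴ, hV2, mul_one]
    have e2 : U * (W * diagonal fun j => ((b j : ℝ) : ℂ)) * Vᴴ = Y := by
      rw [hW, hYd]
      simp only [← Matrix.mul_assoc]
      rw [hU2, one_mul]
    rw [← e, hD]
    exact e2
lemma exp_herm_inj {d : ℕ} {X Y : Matrix (Fin d) (Fin d) ℂ} (hX : X.IsHermitian)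
    (hY : Y.IsHermitian) (h : NormedSpace.exp X = NormedSpace.exp Y) : X = Y := by
  obtain ⟨S, hS, _, hS0⟩ := key_pos X Y hX hY
  apply hS0
  have hz : (S : ℂ) = 0 := by rw [← hS, h, sub_self, Matrix.zero_mul, Matrix.trace_zero]
  exact_mod_cast hz

lemma comm_of_comm_exp {d : ℕ} {H X : Matrix (Fin d) (Fin d) ℂ} (hX : X.IsHermitian)
    (h : H * NormedSpace.exp X = NormedSpace.exp X * H) : H * X = X * H := by
  obtain ⟨U, a, hU1, hU2, hXd, hXe⟩ := herm_decomp hX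
  set K := Uᴴ * H * U with hK
  rw [hXe] at h
  have h2 := congrArg (fun M => Uᴴ * M * U) h
  simp only [← Matrix.mul_assoc] at h2
  rw [Matrix.mul_assoc _ Uᴴ U, hU1, mul_one, one_mul] at h2
  have hKE : K * diagonal (fun i => Complex.exp (a i))
      = diagonal (fun i => Complex.exp (a i)) * K := by
    rw [hK]
    simpa only [Matrix.mul_assoc] using h2
  have hent : ∀ i j, K i j * Complex.exp (a j) = Complex.exp (a i) * K i j := by
    intro i j
    have hc := congrFun (congrFun hKE i) j
    rwa [Matrix.mul_diagonal, Matrix.diagonal_mul] at hc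
  have haij : ∀ i j, K i j * ((a j : ℝ) : ℂ) = ((a i : ℝ) : ℂ) * K i j := by
    intro i j
    by_cases hK0 : K i j = 0
    · rw [hK0]; ring
    · have hc := hent i j
      rw [mul_comm (K i j) (Complex.exp ((a j : ℝ) : ℂ))] at hc
      have hexp := mul_right_cancel₀ hK0 hc
      rw [← Complex.ofReal_exp, ← Complex.ofReal_exp, Complex.ofReal_inj] at hexp
      rw [Real.exp_strictMono.injective hexp]
      ring
  have hKD : K * diagonal (fun i => ((a i : ℝ) : ℂ))
      = diagonal (fun i => ((a i : ℝ) : ℂ)) * K := by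
    ext i j
    rw [Matrix.mul_diagonal, Matrix.diagonal_mul]
    exact haij i j
  have hH : U * K * Uᴴ = H := by
    rw [hK]
    simp only [← Matrix.mul_assoc]
    rw [hU2, one_mul, Matrix.mul_assoc, hU2, mul_one]
  have c1 : (U * K * Uᴴ) * (U * diagonal (fun i => ((a i : ℝ) : ℂ)) * Uᴴ)
      = U * (K * diagonal (fun i => ((a i : ℝ) : ℂ))) * Uᴴ := by
    simp only [← Matrix.mul_assoc]
    rw [Matrix.mul_assoc (U * K) Uᴴ U, hU1, mul_one, Matrix.mul_assoc U K]
  have c2 : (U * diagonal (fun i => ((a i : ℝ) : ℂ)) * Uᴴ) * (U * K * Uᴴ)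
      = U * (diagonal (fun i => ((a i : ℝ) : ℂ)) * K) * Uᴴ := by
    simp only [← Matrix.mul_assoc]
    rw [Matrix.mul_assoc (U * diagonal (fun i => ((a i : ℝ) : ℂ))) Uᴴ U, hU1, mul_one,
      Matrix.mul_assoc U (diagonal (fun i => ((a i : ℝ) : ℂ)))]
  rw [← hH, hXd, c1, c2, hKD]

/-- for the quantum reset model `L(ρ) = −i[H,ρ] + Γ(T tr(ρ) − ρ)` with
`T > 0` and `[H,T] = 0` (steady state `ρ⁺ = T`, detailed balance holds), the entropy
production in any faithful state `ρ` satisfies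
`EP(ρ) = tr(L(ρ)(log T − log ρ)) = Γ(Ent(T|ρ) + Ent(ρ|T))`, where
`Ent(μ|ν) = tr(μ log μ) − tr(μ log ν)`; in particular `EP(ρ) ≥ 0` (it is real and
nonnegative) with equality iff `ρ = T`. The matrix logarithms are encoded as the
unique Hermitian matrices `logT`, `logρ` with `exp(logT) = T`, `exp(logρ) = ρ`. -/
theorem stmt18 {d : ℕ}
    (H : Matrix (Fin d) (Fin d) ℂ) (hHh : Hᴴ = H)
    (Γc : ℝ) (hΓ : 0 < Γc)
    (T : Matrix (Fin d) (Fin d) ℂ) (hT : T.PosDef) (hTtr : T.trace = 1)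
    (hHT : H * T = T * H)
    (ρ : Matrix (Fin d) (Fin d) ℂ) (hρ : ρ.PosDef) (hρtr : ρ.trace = 1)
    (logT logρ : Matrix (Fin d) (Fin d) ℂ)
    (hlogT : logTᴴ = logT ∧ NormedSpace.exp logT = T)
    (hlogρ : logρᴴ = logρ ∧ NormedSpace.exp logρ = ρ)
    (L : Matrix (Fin d) (Fin d) ℂ → Matrix (Fin d) (Fin d) ℂ)
    (hL : ∀ σ, L σ = -(Complex.I • (H * σ - σ * H)) + (Γc : ℂ) • (σ.trace • T - σ)) :
    (L ρ * (logT - logρ)).trace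
        = (Γc : ℂ) * (((T * logT).trace - (T * logρ).trace)
            + ((ρ * logρ).trace - (ρ * logT).trace)) ∧
    ((L ρ * (logT - logρ)).trace).im = 0 ∧
    0 ≤ ((L ρ * (logT - logρ)).trace).re ∧
    ((L ρ * (logT - logρ)).trace = 0 ↔ ρ = T) := by
  have hXh : logT.IsHermitian := hlogT.1
  have hYh : logρ.IsHermitian := hlogρ.1
  -- H commutes with logT
  have hHX : H * logT = logT * H := by
    refine comm_of_comm_exp hXh ?_
    rw [hlogT.2]
    exact hHT
  -- ρ commutes with logρ
  have hρY : ρ * logρ = logρ * ρ := by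
    have hc : Commute (NormedSpace.exp logρ) logρ := (Commute.refl logρ).exp_left
    rw [hlogρ.2] at hc
    exact hc
  -- commutator trace vanishes
  have e1 : (ρ * H * logT).trace = (H * ρ * logT).trace := by
    rw [Matrix.mul_assoc ρ H logT, hHX, ← Matrix.mul_assoc, Matrix.trace_mul_comm,
      ← Matrix.mul_assoc]
  have e2 : (ρ * H * logρ).trace = (H * ρ * logρ).trace := by
    rw [Matrix.trace_mul_cycle ρ H logρ, ← hρY, Matrix.trace_mul_cycle ρ logρ H]
  have hcommtr : ((H * ρ - ρ * H) * (logT - logρ)).trace = 0 := by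
    rw [sub_mul, mul_sub, mul_sub, Matrix.trace_sub, Matrix.trace_sub, Matrix.trace_sub, e1, e2]
    ring
  have hmain : (L ρ * (logT - logρ)).trace = (Γc : ℂ) * ((T - ρ) * (logT - logρ)).trace := by
    rw [hL ρ, hρtr, one_smul, Matrix.add_mul, Matrix.neg_mul, smul_mul_assoc, smul_mul_assoc,
      Matrix.trace_add, Matrix.trace_neg, Matrix.trace_smul, Matrix.trace_smul, hcommtr,
      smul_zero, neg_zero, zero_add, smul_eq_mul]
  obtain ⟨S, hStr, hSnn, hSzero⟩ := key_pos logT logρ hXh hYh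
  rw [hlogT.2, hlogρ.2] at hStr
  have hbr : ((T - ρ) * (logT - logρ)).trace
      = ((T * logT).trace - (T * logρ).trace) + ((ρ * logρ).trace - (ρ * logT).trace) := by
    rw [sub_mul, mul_sub, mul_sub, Matrix.trace_sub, Matrix.trace_sub, Matrix.trace_sub]
    ring
  refine ⟨by rw [hmain, hbr], ?_, ?_, ?_⟩
  · rw [hmain, hStr, ← Complex.ofReal_mul]
    exact Complex.ofReal_im _
  · rw [hmain, hStr, ← Complex.ofReal_mul, Complex.ofReal_re]
    exact mul_nonneg hΓ.le hSnn
  · constructor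
    · intro h0
      rw [hmain, hStr, ← Complex.ofReal_mul] at h0
      have hS0 : Γc * S = 0 := by exact_mod_cast h0
      have hXY : logT = logρ := hSzero ((mul_eq_zero.mp hS0).resolve_left hΓ.ne')
      rw [← hlogρ.2, ← hlogT.2, hXY]
    · intro hρT
      have hXY : logT = logρ := exp_herm_inj hXh hYh (by rw [hlogT.2, hlogρ.2, hρT])
      rw [hmain, hXY, sub_self, Matrix.mul_zero, Matrix.trace_zero, mul_zero]
end

section
/- Explicit two-time measurement law for the quantum reset model: let L(ρ₀) = −i[H,ρ₀] + Γ(T tr(ρ₀) − ρ₀) with T > 0, [H,T] = 0, S = −log T = Σ_s sP_s having simple spectrum with the differences s'−s (s ≠ s') pairwise distinct, and ρ₀ > 0. Then Q^t_{ρ₀}(ΔS = s'−s) = (1 − e^{−tΓ}) tr(ρ₀P_s) e^{−s'} for s' ≠ s, and Q^t_{ρ₀}(ΔS = 0) = (1 − e^{−tΓ}) tr(ρ₀T) + e^{−tΓ}. -/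
open Matrix
open scoped ComplexOrder

/-- explicit two-time measurement law for the quantum reset model:
for `L(ρ₀) = −i[H,ρ₀] + Γ(T tr(ρ₀) − ρ₀)` with `T > 0`, `[H,T] = 0`,
`S = −log T = Σ_i s_i P_i` having simple spectrum with pairwise distinct differences,
rank-one projections `P_i` commuting with `H`, and `ρ₀ > 0`; using the explicit
semigroup `e^{tL}(X) = e^{−tΓ}e^{−itH}Xe^{itH} + T tr(X)(1 − e^{−tΓ})`, the
two-time-measurement law `Q^t_{ρ₀}(ΔS = σ) = Σ_{s_j−s_i=σ} tr(P_j e^{tL}(P_iρ₀P_i))`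
satisfies `Q^t_{ρ₀}(ΔS = s_j−s_i) = (1 − e^{−tΓ}) tr(ρ₀P_i) e^{−s_j}` for `i ≠ j`,
and `Q^t_{ρ₀}(ΔS = 0) = (1 − e^{−tΓ}) tr(ρ₀T) + e^{−tΓ}`. -/
theorem stmt19 {d : ℕ}
    (H : Matrix (Fin d) (Fin d) ℂ) (hHh : Hᴴ = H)
    (Γc : ℝ) (hΓ : 0 < Γc)
    (s : Fin d → ℝ) (hs : Function.Injective s)
    (hgen : ∀ i j k l : Fin d, i ≠ j → k ≠ l → s j - s i = s l - s k → i = k ∧ j = l)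
    (P : Fin d → Matrix (Fin d) (Fin d) ℂ)
    (hPh : ∀ i, (P i)ᴴ = P i)
    (hPo : ∀ i j, P i * P j = if i = j then P i else 0)
    (hPrk : ∀ i, (P i).trace = 1)
    (hPsum : ∑ i, P i = 1)
    (hHP : ∀ i, H * P i = P i * H)
    (T : Matrix (Fin d) (Fin d) ℂ)
    (hT : T = ∑ i, (Real.exp (-(s i)) : ℂ) • P i)
    (hTpos : T.PosDef) (hTtr : T.trace = 1) (hHT : H * T = T * H)
    (ρ₀ : Matrix (Fin d) (Fin d) ℂ) (hρ₀ : ρ₀.PosDef) (hρ₀tr : ρ₀.trace = 1)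
    (E : ℝ → (Matrix (Fin d) (Fin d) ℂ →ₗ[ℂ] Matrix (Fin d) (Fin d) ℂ))
    (hE : ∀ t X, E t X = Complex.exp (-(t * Γc)) •
            (NormedSpace.exp (-(Complex.I * t) • H) * X *
              NormedSpace.exp ((Complex.I * t) • H))
          + (1 - Complex.exp (-(t * Γc))) • (X.trace • T)) :
    ∀ t : ℝ, 0 ≤ t →
      (∀ i j : Fin d, i ≠ j →
        (∑ k, ∑ l, if s l - s k = s j - s i
            then (P l * E t (P k * ρ₀ * P k)).trace else 0)
          = (1 - Complex.exp (-(t * Γc))) * (ρ₀ * P i).trace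
              * (Real.exp (-(s j)) : ℂ)) ∧
      (∑ k, ∑ l, if s l - s k = 0 then (P l * E t (P k * ρ₀ * P k)).trace else 0)
        = (1 - Complex.exp (-(t * Γc))) * (ρ₀ * T).trace
            + Complex.exp (-(t * Γc)) := by
  intro t _ht
  set et : ℂ := Complex.exp (-((t : ℂ) * (Γc : ℂ))) with het
  set A : Matrix (Fin d) (Fin d) ℂ := NormedSpace.exp ((-(Complex.I * (t : ℂ))) • H) with hA
  set B : Matrix (Fin d) (Fin d) ℂ := NormedSpace.exp (((Complex.I * (t : ℂ))) • H) with hB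
  have hcomm : Commute (((Complex.I * (t : ℂ))) • H) ((-(Complex.I * (t : ℂ))) • H) := by
    rw [neg_smul]; exact (Commute.refl _).neg_right
  have hBA : B * A = 1 := by
    rw [hA, hB, ← Matrix.exp_add_of_commute _ _ hcomm]
    have h0 : ((Complex.I * (t : ℂ)) • H) + ((-(Complex.I * (t : ℂ))) • H) = 0 := by
      rw [neg_smul, add_neg_cancel]
    rw [h0, NormedSpace.exp_zero]
  have hPB : ∀ l, P l * B = B * P l := by
    intro l
    have h0 : Commute (P l) H := (hHP l).symm
    have h1 : Commute (P l) ((Complex.I * (t : ℂ)) • H) := h0.smul_right _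
    exact (h1.exp_right)
  have hPlT : ∀ l, P l * T = (Real.exp (-(s l)) : ℂ) • P l := by
    intro l
    rw [hT, Finset.mul_sum]
    simp_rw [Matrix.mul_smul, hPo]
    rw [Finset.sum_eq_single l (fun b _ hb => by simp [Ne.symm hb]) (by simp)]
    simp
  have htrT : ∀ l, (P l * T).trace = (Real.exp (-(s l)) : ℂ) := by
    intro l; rw [hPlT, Matrix.trace_smul, hPrk, smul_eq_mul, mul_one]
  have hconj : ∀ l X, (P l * (A * X * B)).trace = (P l * X).trace := by
    intro l X
    have h1 : P l * (A * X * B) = (P l * A * X) * B := by noncomm_ring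
    rw [h1, Matrix.trace_mul_comm]
    have h2 : B * (P l * A * X) = P l * X := by
      calc B * (P l * A * X) = (B * P l) * (A * X) := by noncomm_ring
        _ = (P l * B) * (A * X) := by rw [hPB l]
        _ = P l * ((B * A) * X) := by noncomm_ring
        _ = P l * X := by rw [hBA, one_mul]
    rw [h2]
  have htrP : ∀ k l, (P l * (P k * ρ₀ * P k)).trace
      = if k = l then (ρ₀ * P k).trace else 0 := by
    intro k l
    rw [Matrix.trace_mul_comm]
    have h1 : (P k * ρ₀ * P k) * P l = P k * ρ₀ * (P k * P l) := by noncomm_ring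
    rw [h1, hPo]
    by_cases hkl : k = l
    · rw [if_pos hkl, if_pos hkl, Matrix.trace_mul_comm]
      have h2 : P k * (P k * ρ₀) = (P k * P k) * ρ₀ := by noncomm_ring
      rw [h2, hPo, if_pos rfl, Matrix.trace_mul_comm]
    · rw [if_neg hkl, if_neg hkl, mul_zero, Matrix.trace_zero]
  have key : ∀ k l, (P l * E t (P k * ρ₀ * P k)).trace
      = (if k = l then et * (ρ₀ * P k).trace else 0)
        + (1 - et) * (ρ₀ * P k).trace * (Real.exp (-(s l)) : ℂ) := by
    intro k l
    rw [hE]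
    rw [mul_add, Matrix.trace_add, Matrix.mul_smul, Matrix.trace_smul,
      Matrix.mul_smul, Matrix.mul_smul, Matrix.trace_smul, Matrix.trace_smul]
    rw [hconj, htrP, htrT]
    have htrX : (P k * ρ₀ * P k).trace = (ρ₀ * P k).trace := by
      rw [Matrix.trace_mul_comm]
      have h2 : P k * (P k * ρ₀) = (P k * P k) * ρ₀ := by noncomm_ring
      rw [h2, hPo, if_pos rfl, Matrix.trace_mul_comm]
    rw [htrX]
    simp only [smul_eq_mul]
    by_cases hkl : k = l
    · rw [if_pos hkl, if_pos hkl]; ring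
    · rw [if_neg hkl, if_neg hkl]; ring
  constructor
  · intro i j hij
    have hpt : ∀ k l : Fin d,
        (if s l - s k = s j - s i then (P l * E t (P k * ρ₀ * P k)).trace else 0)
        = if k = i then (if l = j then
            (1 - et) * (ρ₀ * P i).trace * (Real.exp (-(s j)) : ℂ) else 0) else 0 := by
      intro k l
      by_cases h : s l - s k = s j - s i
      · rw [if_pos h]
        have hkl : k ≠ l := by
          rintro rfl
          rw [sub_self] at h
          exact hij (hs (sub_eq_zero.mp h.symm)).symm
        obtain ⟨rfl, rfl⟩ := hgen i j k l hij hkl h.symm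
        rw [key, if_neg hkl, zero_add, if_pos rfl, if_pos rfl]
      · rw [if_neg h]
        by_cases hk : k = i
        · by_cases hl : l = j
          · exact absurd (by rw [hk, hl]) h
          · simp [hk, hl]
        · simp [hk]
    simp_rw [hpt]
    simp
  · have hcond : ∀ k l : Fin d, (s l - s k = 0) = (l = k) := by
      intro k l
      simp [sub_eq_zero, hs.eq_iff]
    simp_rw [hcond, Finset.sum_ite_eq', Finset.mem_univ, if_true]
    have key2 : ∀ k, (P k * E t (P k * ρ₀ * P k)).trace
        = et * (ρ₀ * P k).trace + (1 - et) * (ρ₀ * P k).trace * (Real.exp (-(s k)) : ℂ) := by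
      intro k; rw [key, if_pos rfl]
    simp_rw [key2]
    have h1 : ∑ k, (ρ₀ * P k).trace = 1 := by
      rw [← Matrix.trace_sum, ← Finset.mul_sum, hPsum, mul_one, hρ₀tr]
    have h2 : (ρ₀ * T).trace = ∑ k, (Real.exp (-(s k)) : ℂ) * (ρ₀ * P k).trace := by
      rw [hT, Finset.mul_sum]
      simp_rw [Matrix.mul_smul]
      rw [Matrix.trace_sum]
      simp [Matrix.trace_smul]
    rw [Finset.sum_add_distrib, ← Finset.mul_sum, h1, mul_one]
    have h3 : ∑ k, (1 - et) * (ρ₀ * P k).trace * (Real.exp (-(s k)) : ℂ)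
        = (1 - et) * (ρ₀ * T).trace := by
      rw [h2, Finset.mul_sum]
      exact Finset.sum_congr rfl fun k _ => by ring
    rw [h3]; ring
end
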